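/- arXiv:1009.3342 — 10 statements merged into one kernel-verified Lean document; each statement's English description precedes it below -/
import Mathlib

section
/- Let (X,S) be a non-degenerate involutive set-theoretical solution, writing S(x,y) = (g_x(y), f_y(x)) with all g_x bijective. Then for every x ∈ X there exists a unique y ∈ X such that S(x,y) = (x,y). -/
/-- for a non-degenerate involutive solution `(X,S)` with
`S(x,y) = (g_x(y), f_y(x))`, for every `x` there is a unique `y` with `S(x,y) = (x,y)`. -/
theorem existsUnique_fixed_partner {X : Type*} (S : X × X → X × X) (g f : X → X → X)
    (hS : ∀ x y, S (x, y) = (g x y, f y x))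
    (hinv : S ∘ S = id)
    (hg : ∀ x, Function.Bijective (g x)) (hf : ∀ x, Function.Bijective (f x)) :
    ∀ x : X, ∃! y : X, S (x, y) = (x, y) := by
  intro x
  obtain ⟨y, hy⟩ := (hg x).surjective x
  have hinv' : S (S (x, y)) = (x, y) := congrFun hinv (x, y)
  rw [hS x y, hy, hS x (f y x)] at hinv'
  have h1 : g x (f y x) = x := (Prod.mk.injEq _ _ _ _).mp hinv' |>.1
  have hfy : f y x = y := (hg x).injective (h1.trans hy.symm)
  refine ⟨y, ?_, ?_⟩
  · show S (x, y) = (x, y); rw [hS x y, hy, hfy]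
  · intro z hz
    rw [hS x z] at hz
    exact (hg x).injective (((Prod.mk.injEq _ _ _ _).mp hz).1.trans hy.symm)
end

section
/- Let (X,S) be a non-degenerate braided set-theoretical solution with S(x,y) = (g_x(y), f_y(x)). Then the assignment x ↦ f_x extends to a right action of the structure group G(X,S) on X; that is, the map sending each generator x to the permutation f_x of X respects all defining relations x·y = g_x(y)·f_y(x), inducing a group homomorphism from G(X,S) to the opposite of the symmetric group on X. -/
def map12 {X : Type*} (T : X × X → X × X) : X × X × X → X × X × X :=
  fun p => ((T (p.1, p.2.1)).1, (T (p.1, p.2.1)).2, p.2.2)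

def map23 {X : Type*} (T : X × X → X × X) : X × X × X → X × X × X :=
  fun p => (p.1, (T p.2).1, (T p.2).2)

/-- The relators `x y (g_x(y) f_y(x))⁻¹` of the structure group of `(X,S)`. -/
def structureRels {X : Type*} (g f : X → X → X) : Set (FreeGroup X) :=
  {r | ∃ x y : X, r = FreeGroup.of x * FreeGroup.of y *
    (FreeGroup.of (g x y) * FreeGroup.of (f y x))⁻¹}

/-- for a non-degenerate braided solution `(X,S)`, the assignment
`x ↦ f_x` respects the defining relations `xy = g_x(y)f_y(x)` (in the right-action order
`f_{f_y(x)} ∘ f_{g_x(y)} = f_y ∘ f_x`), and hence induces a group homomorphism from the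
structure group `G(X,S)` to the opposite of the symmetric group on `X`, i.e. a right
action of `G(X,S)` on `X`. -/
theorem rightAction_of_braided {X : Type*} (S : X × X → X × X) (g f : X → X → X)
    (hS : ∀ x y, S (x, y) = (g x y, f y x))
    (hbij : Function.Bijective S)
    (hg : ∀ x, Function.Bijective (g x)) (hf : ∀ x, Function.Bijective (f x))
    (hbraid : map12 S ∘ map23 S ∘ map12 S = map23 S ∘ map12 S ∘ map23 S) :
    (∀ x y : X, f (f y x) ∘ f (g x y) = f y ∘ f x) ∧
    ∃ φ : PresentedGroup (structureRels g f) →* (Equiv.Perm X)ᵐᵒᵖ,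
      ∀ x : X, φ (PresentedGroup.of x) = MulOpposite.op (Equiv.ofBijective (f x) (hf x)) := by

  have key : ∀ x y : X, f (f y x) ∘ f (g x y) = f y ∘ f x := by
    intro x y
    funext a
    have h := congrFun hbraid (a, x, y)
    have h3 := congrArg (fun p : X × X × X => p.2.2) h
    simp only [Function.comp_apply, map12, map23, hS] at h3
    simpa using h3.symm
  refine ⟨key, ?_⟩
  set F : X → (Equiv.Perm X)ᵐᵒᵖ := fun x => MulOpposite.op (Equiv.ofBijective (f x) (hf x))
  have hrel : ∀ r ∈ structureRels g f, FreeGroup.lift F r = 1 := by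
    rintro r ⟨x, y, rfl⟩
    have : F x * F y = F (g x y) * F (f y x) := by
      simp only [F, ← MulOpposite.op_mul]
      congr 1
      ext a
      have := congrFun (key x y) a
      simpa [Equiv.ofBijective] using this.symm
    simp [this]
  refine ⟨PresentedGroup.toGroup hrel, fun x => ?_⟩
  simp [PresentedGroup.toGroup.of, F]
end

section
/- Let (X,S) be a non-degenerate braided set-theoretical solution. Then the assignment x ↦ g_x defines a left action of the structure group G(X,S) on X; i.e., g_x ∘ g_y = g_{g_x(y)} ∘ g_{f_y(x)} for all x,y ∈ X. -/
/-- for a non-degenerate braided solution `(X,S)`, the assignment `x ↦ g_x`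
defines a left action of the structure group on `X`:
`g_x ∘ g_y = g_{g_x(y)} ∘ g_{f_y(x)}` for all `x, y`. -/
theorem leftAction_of_braided {X : Type*} (S : X × X → X × X) (g f : X → X → X)
    (hS : ∀ x y, S (x, y) = (g x y, f y x))
    (hbij : Function.Bijective S)
    (hg : ∀ x, Function.Bijective (g x)) (hf : ∀ x, Function.Bijective (f x))
    (hbraid : map12 S ∘ map23 S ∘ map12 S = map23 S ∘ map12 S ∘ map23 S) :
    ∀ x y : X, g x ∘ g y = g (g x y) ∘ g (f y x) := by
  intro x y
  funext z
  have h := congrArg Prod.fst (congrFun hbraid (x, y, z))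
  simp only [Function.comp_apply, map12, map23, hS] at h
  exact h.symm
end

section
/- Let (X,S) be a non-degenerate symmetric solution with X finite, and Y ⊆ X invariant. Then any element of the structure monoid M(X,S) that lies in the submonoid M_Y generated by Y has the property that every word over X representing it uses only letters from Y; consequently every left or right divisor (in M(X,S)) of an element of M_Y lies in M_Y. -/
/-- The defining relations `xy = g_x(y) f_y(x)` of the structure monoid of `(X,S)`. -/
def ybMonRel {X : Type*} (g f : X → X → X) : FreeMonoid X → FreeMonoid X → Prop :=
  fun a b => ∃ x y : X, a = FreeMonoid.of x * FreeMonoid.of y ∧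
    b = FreeMonoid.of (g x y) * FreeMonoid.of (f y x)

/-- for a non-degenerate symmetric solution `(X,S)` with `X` finite and
`Y ⊆ X` invariant, every element of the submonoid `M_Y` of the structure monoid generated
by `Y` is represented only by words whose letters all lie in `Y`; consequently every left
or right divisor of an element of `M_Y` lies in `M_Y`. -/
theorem words_of_invariant_submonoid {X : Type*} [Finite X]
    (S : X × X → X × X) (g f : X → X → X)
    (hS : ∀ x y, S (x, y) = (g x y, f y x))
    (hbij : Function.Bijective S)
    (hinv : S ∘ S = id)
    (hbraid : map12 S ∘ map23 S ∘ map12 S = map23 S ∘ map12 S ∘ map23 S)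
    (hg : ∀ x, Function.Bijective (g x)) (hf : ∀ x, Function.Bijective (f x))
    (Y : Set X) (hY : ∀ p : X × X, p ∈ Y ×ˢ Y → S p ∈ Y ×ˢ Y) :
    ∀ m ∈ Submonoid.closure (PresentedMonoid.of (ybMonRel g f) '' Y),
      (∀ w : FreeMonoid X, PresentedMonoid.mk (ybMonRel g f) w = m →
        ∀ x ∈ FreeMonoid.toList w, x ∈ Y) ∧
      (∀ u v : PresentedMonoid (ybMonRel g f), m = u * v →
        u ∈ Submonoid.closure (PresentedMonoid.of (ybMonRel g f) '' Y) ∧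
        v ∈ Submonoid.closure (PresentedMonoid.of (ybMonRel g f) '' Y)) := by
  set r := ybMonRel g f with hr
  -- the "all letters in Y" predicate
  set A : FreeMonoid X → Prop := fun w => ∀ x ∈ FreeMonoid.toList w, x ∈ Y with hA
  have hAmul : ∀ a b : FreeMonoid X, A (a * b) ↔ A a ∧ A b := by
    intro a b
    simp [hA, FreeMonoid.toList_mul, List.mem_append]
    constructor
    · intro h; exact ⟨fun x hx => h x (Or.inl hx), fun x hx => h x (Or.inr hx)⟩
    · rintro ⟨h1, h2⟩ x (hx | hx)
      exacts [h1 x hx, h2 x hx]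
  have hAof : ∀ x : X, A (FreeMonoid.of x) ↔ x ∈ Y := by
    intro x; simp [hA]
  -- the relation preserves A in both directions
  have hrel : ∀ a b, r a b → (A a ↔ A b) := by
    rintro a b ⟨x, y, rfl, rfl⟩
    rw [hAmul, hAmul, hAof, hAof, hAof, hAof]
    constructor
    · rintro ⟨hx, hy⟩
      have := hY (x, y) ⟨hx, hy⟩
      rw [hS] at this
      exact ⟨this.1, this.2⟩
    · rintro ⟨h1, h2⟩
      have := hY (g x y, f y x) ⟨h1, h2⟩
      rw [← hS, ← Function.comp_apply (f := S) (g := S), hinv] at this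
      exact this
  have hcon : ∀ a b, conGen r a b → (A a ↔ A b) := by
    intro a b h
    induction h with
    | of a b h => exact hrel a b h
    | refl => exact Iff.rfl
    | symm _ ih => exact ih.symm
    | trans _ _ ih1 ih2 => exact ih1.trans ih2
    | mul _ _ ih1 ih2 => rw [hAmul, hAmul, ih1, ih2]
  have hmk : ∀ a b : FreeMonoid X, PresentedMonoid.mk r a = PresentedMonoid.mk r b →
      conGen r a b := by
    intro a b h
    exact Quotient.exact h
  -- words with all letters in Y map into the closure
  have hAin : ∀ w : FreeMonoid X, A w →
      PresentedMonoid.mk r w ∈ Submonoid.closure (PresentedMonoid.of r '' Y) := by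
    intro w
    induction w using FreeMonoid.recOn with
    | one => intro _; exact Submonoid.one_mem _
    | of_mul x w ih =>
      intro h
      rw [hAmul, hAof] at h
      rw [map_mul]
      exact Submonoid.mul_mem _ (Submonoid.subset_closure ⟨x, h.1, rfl⟩) (ih h.2)
  -- every element of the closure has a representative with all letters in Y
  intro m hm
  have hrep : ∃ w : FreeMonoid X, PresentedMonoid.mk r w = m ∧ A w := by
    induction hm using Submonoid.closure_induction with
    | mem x hx =>
      obtain ⟨y, hy, rfl⟩ := hx
      exact ⟨FreeMonoid.of y, rfl, by rw [hAof]; exact hy⟩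
    | one => exact ⟨1, rfl, by simp [hA]⟩
    | mul a b _ _ iha ihb =>
      obtain ⟨wa, hwa, hAa⟩ := iha
      obtain ⟨wb, hwb, hAb⟩ := ihb
      exact ⟨wa * wb, by rw [map_mul, hwa, hwb], (hAmul wa wb).mpr ⟨hAa, hAb⟩⟩
  obtain ⟨w0, hw0, hAw0⟩ := hrep
  have key : ∀ w : FreeMonoid X, PresentedMonoid.mk r w = m → A w := by
    intro w hw
    exact (hcon w w0 (hmk w w0 (by rw [hw, hw0]))).mpr hAw0
  refine ⟨key, ?_⟩
  intro u v huv
  obtain ⟨wu, rfl⟩ : ∃ b, PresentedMonoid.mk r b = u :=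
    PresentedMonoid.inductionOn u (fun a => ⟨a, rfl⟩)
  obtain ⟨wv, rfl⟩ : ∃ b, PresentedMonoid.mk r b = v :=
    PresentedMonoid.inductionOn v (fun a => ⟨a, rfl⟩)
  have : A (wu * wv) := key (wu * wv) (by rw [map_mul, ← huv])
  rw [hAmul] at this
  exact ⟨hAin wu this.1, hAin wv this.2⟩
end

section
/- Let (X,S) be a non-degenerate symmetric solution with X finite, M its structure monoid with Garside element Δ. For each divisor s of Δ, there is a unique subset X_ℓ(s) ⊆ X such that s is the right lcm of X_ℓ(s), and a unique subset X_r(s) ⊆ X such that s is the left lcm of X_r(s); moreover |X_ℓ(s)| = |X_r(s)|, and this common cardinality equals the length of s. -/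
section Garside

variable {M : Type*} [Monoid M]

/-- Left divisibility. -/
def LDvd (a b : M) : Prop := ∃ c, b = a * c

/-- Right divisibility. -/
def RDvd (a b : M) : Prop := ∃ c, b = c * a

/-- The set of left divisors of `d`. -/
def LDiv (d : M) : Set M := {a | LDvd a d}

/-- The set of right divisors of `d`. -/
def RDiv (d : M) : Set M := {a | RDvd a d}

/-- An element is balanced if its left and right divisors coincide. -/
def BalancedElem (d : M) : Prop := LDiv d = RDiv d

/-- `l` is the right lcm (lcm for left divisibility) of the set `A`. -/
def IsRightLcmOfSet (A : Set M) (l : M) : Prop :=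
  (∀ a ∈ A, LDvd a l) ∧ ∀ m, (∀ a ∈ A, LDvd a m) → LDvd l m

/-- `l` is the left lcm (lcm for right divisibility) of the set `A`. -/
def IsLeftLcmOfSet (A : Set M) (l : M) : Prop :=
  (∀ a ∈ A, RDvd a l) ∧ ∀ m, (∀ a ∈ A, RDvd a m) → RDvd l m

end Garside

/-- Twisted monoid: multisets with a function part. -/
structure TwMon (X : Type*) where
  ms : Multiset X
  fn : X → X

namespace TwMon
variable {X : Type*}

instance : Mul (TwMon X) := ⟨fun p q => ⟨p.ms + q.ms.map p.fn, p.fn ∘ q.fn⟩⟩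
instance : One (TwMon X) := ⟨⟨0, id⟩⟩

lemma mul_def (p q : TwMon X) : p * q = ⟨p.ms + q.ms.map p.fn, p.fn ∘ q.fn⟩ := rfl
lemma one_def : (1 : TwMon X) = ⟨0, id⟩ := rfl

instance : Monoid (TwMon X) where
  mul_assoc p q r := by
    simp [mul_def, Multiset.map_map, Multiset.map_add, add_assoc, Function.comp_assoc]
  one_mul p := by simp [mul_def, one_def]
  mul_one p := by simp [mul_def, one_def]

end TwMon

namespace YBAux

section YB
variable {X : Type*} (g f : X → X → X)

local notation "M" => PresentedMonoid (ybMonRel g f)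
local notation "oo" => PresentedMonoid.of (ybMonRel g f)

lemma rel_eq (x y : X) : (oo x) * oo y = oo (g x y) * oo (f y x) := by
  show PresentedMonoid.mk (ybMonRel g f) (FreeMonoid.of x * FreeMonoid.of y) =
    PresentedMonoid.mk (ybMonRel g f) (FreeMonoid.of (g x y) * FreeMonoid.of (f y x))
  exact Quotient.sound (ConGen.Rel.of _ _ ⟨x, y, rfl, rfl⟩)

/-- `mk'` sends a list of generators to the product in the presented monoid. -/
def mk' (l : List X) : M := PresentedMonoid.mk (ybMonRel g f) (FreeMonoid.ofList l)

lemma mk'_nil : mk' g f ([] : List X) = 1 := rfl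
lemma mk'_cons (x : X) (l : List X) : mk' g f (x :: l) = oo x * mk' g f l := rfl
lemma mk'_append (l₁ l₂ : List X) : mk' g f (l₁ ++ l₂) = mk' g f l₁ * mk' g f l₂ := by
  show PresentedMonoid.mk _ (FreeMonoid.ofList l₁ * FreeMonoid.ofList l₂) = _
  rw [map_mul]; rfl
lemma mk'_snoc (l : List X) (x : X) : mk' g f (l ++ [x]) = mk' g f l * oo x :=
  mk'_append g f l [x]

lemma mk'_surj (m : M) : ∃ l : List X, m = mk' g f l := by
  induction m with
  | _ a => exact ⟨FreeMonoid.toList a, by simp [mk']⟩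

variable (hI1 : ∀ x y, g (g x y) (f y x) = x)
variable (hB1 : ∀ x y z, g x (g y z) = g (g x y) (g (f y x) z))
variable (hI2 : ∀ x y, f (f y x) (g x y) = y)
variable (hB3 : ∀ x y z, f y (f x z) = f (f y x) (f (g x y) z))

/-- The left cocycle homomorphism. -/
def phi : M →* TwMon X :=
  PresentedMonoid.lift (fun x => ⟨{x}, g x⟩) (by
    rintro a b ⟨x, y, rfl, rfl⟩
    simp only [map_mul, FreeMonoid.lift_eval_of, TwMon.mul_def]
    refine congrArg₂ TwMon.mk ?_ (funext fun z => hB1 x y z)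
    simp [hI1 x y, Multiset.singleton_add, ← Multiset.cons_zero, Multiset.cons_swap])

/-- The right cocycle homomorphism (into the opposite monoid). -/
def psi : M →* (TwMon X)ᵐᵒᵖ :=
  PresentedMonoid.lift (fun x => MulOpposite.op ⟨{x}, f x⟩) (by
    rintro a b ⟨x, y, rfl, rfl⟩
    simp only [map_mul, FreeMonoid.lift_eval_of, ← MulOpposite.op_mul, TwMon.mul_def]
    refine congrArg MulOpposite.op (congrArg₂ TwMon.mk ?_ (funext fun z => hB3 x y z))
    simp [hI2 x y, Multiset.singleton_add, ← Multiset.cons_zero, Multiset.cons_swap])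

/-- Left divisibility invariant. -/
def D (m : M) : Multiset X := (phi g f hI1 hB1 m).ms
def lam (m : M) : X → X := (phi g f hI1 hB1 m).fn
/-- Right divisibility invariant. -/
def rD (m : M) : Multiset X := ((psi g f hI2 hB3 m).unop).ms
def rlam (m : M) : X → X := ((psi g f hI2 hB3 m).unop).fn

lemma D_of (x : X) : D g f hI1 hB1 (oo x) = {x} := rfl
lemma D_one : D g f hI1 hB1 1 = 0 := rfl
lemma lam_of (x : X) : lam g f hI1 hB1 (oo x) = g x := rfl
lemma D_mul (m n : M) :
    D g f hI1 hB1 (m * n) = D g f hI1 hB1 m + (D g f hI1 hB1 n).map (lam g f hI1 hB1 m) := by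
  simp [D, lam, map_mul, TwMon.mul_def]
lemma D_cons (x : X) (m : M) :
    D g f hI1 hB1 (oo x * m) = x ::ₘ (D g f hI1 hB1 m).map (g x) := by
  simp [D_mul, D_of, lam_of, Multiset.singleton_add]

lemma rD_of (x : X) : rD g f hI2 hB3 (oo x) = {x} := rfl
lemma rD_one : rD g f hI2 hB3 1 = 0 := rfl
lemma rlam_of (x : X) : rlam g f hI2 hB3 (oo x) = f x := rfl
lemma rD_mul (m n : M) :
    rD g f hI2 hB3 (m * n) = rD g f hI2 hB3 n + (rD g f hI2 hB3 m).map (rlam g f hI2 hB3 n) := by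
  simp [rD, rlam, map_mul, TwMon.mul_def]
lemma rD_snoc (m : M) (x : X) :
    rD g f hI2 hB3 (m * oo x) = x ::ₘ (rD g f hI2 hB3 m).map (f x) := by
  simp [rD_mul, rD_of, rlam_of, Multiset.singleton_add]

lemma card_D_mk' (l : List X) : (D g f hI1 hB1 (mk' g f l)).card = l.length := by
  induction l with
  | nil => simp [mk'_nil, D_one]
  | cons x l ih => simp [mk'_cons, D_cons, ih]

lemma card_rD_mk' (l : List X) : (rD g f hI2 hB3 (mk' g f l)).card = l.length := by
  induction l using List.reverseRecOn with
  | nil => simp [mk'_nil, rD_one]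
  | append_singleton l x ih => simp [mk'_snoc, rD_snoc, ih]

lemma card_rD_eq_card_D (m : M) :
    (rD g f hI2 hB3 m).card = (D g f hI1 hB1 m).card := by
  obtain ⟨l, rfl⟩ := mk'_surj g f m
  rw [card_D_mk', card_rD_mk']

variable (hg : ∀ x, Function.Bijective (g x)) (hf : ∀ x, Function.Bijective (f x))

lemma Q_left : ∀ (l : List X) (x : X), x ∈ D g f hI1 hB1 (mk' g f l) →
    ∃ w : List X, mk' g f l = oo x * mk' g f w := by
  intro l
  induction l with
  | nil => intro x hx; simp [mk'_nil, D_one] at hx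
  | cons a l ih =>
    intro x hx
    rw [mk'_cons, D_cons] at hx
    rcases Multiset.mem_cons.mp hx with h | h
    · exact ⟨l, by rw [h, mk'_cons]⟩
    · obtain ⟨t, ht, rfl⟩ := Multiset.mem_map.mp h
      obtain ⟨w, hw⟩ := ih t ht
      refine ⟨f t a :: w, ?_⟩
      rw [mk'_cons, hw, ← mul_assoc, rel_eq, mul_assoc, mk'_cons]

lemma Q_right : ∀ (l : List X) (x : X), x ∈ rD g f hI2 hB3 (mk' g f l) →
    ∃ w : List X, mk' g f l = mk' g f w * oo x := by
  intro l
  induction l using List.reverseRecOn with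
  | nil => intro x hx; simp [mk'_nil, rD_one] at hx
  | append_singleton l a ih =>
    intro x hx
    rw [mk'_snoc, rD_snoc] at hx
    rcases Multiset.mem_cons.mp hx with h | h
    · exact ⟨l, by rw [h, mk'_snoc]⟩
    · obtain ⟨t, ht, rfl⟩ := Multiset.mem_map.mp h
      obtain ⟨w, hw⟩ := ih t ht
      refine ⟨w ++ [g t a], ?_⟩
      rw [mk'_snoc, hw, mul_assoc, rel_eq, ← mul_assoc, mk'_snoc]

lemma P_left (hg : ∀ x, Function.Bijective (g x)) : ∀ (n : ℕ) (u v : List X), u.length = n →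
    D g f hI1 hB1 (mk' g f u) = D g f hI1 hB1 (mk' g f v) → mk' g f u = mk' g f v := by
  intro n
  induction n with
  | zero =>
    intro u v hu hD
    have hv : v.length = 0 := by
      rw [← card_D_mk' g f hI1 hB1 v, ← hD, card_D_mk', hu]
    rw [List.length_eq_zero_iff.mp hu, List.length_eq_zero_iff.mp hv]
  | succ n ih =>
    intro u v hu hD
    rcases u with _ | ⟨x, u₁⟩
    · simp at hu
    have hx : x ∈ D g f hI1 hB1 (mk' g f v) := by
      rw [← hD, mk'_cons, D_cons]; exact Multiset.mem_cons_self _ _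
    obtain ⟨w, hw⟩ := Q_left g f hI1 hB1 v x hx
    rw [hw, ← mk'_cons] at hD ⊢
    rw [mk'_cons, mk'_cons, D_cons, D_cons] at hD
    have hD₁ : D g f hI1 hB1 (mk' g f u₁) = D g f hI1 hB1 (mk' g f w) :=
      Multiset.map_injective (hg x).1 ((Multiset.cons_inj_right x).mp hD)
    have := ih u₁ w (by simpa using hu) hD₁
    rw [mk'_cons, mk'_cons, this]

lemma P_right (hf : ∀ x, Function.Bijective (f x)) : ∀ (n : ℕ) (u v : List X), u.length = n →
    rD g f hI2 hB3 (mk' g f u) = rD g f hI2 hB3 (mk' g f v) → mk' g f u = mk' g f v := by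
  intro n
  induction n with
  | zero =>
    intro u v hu hD
    have hv : v.length = 0 := by
      rw [← card_rD_mk' g f hI2 hB3 v, ← hD, card_rD_mk', hu]
    rw [List.length_eq_zero_iff.mp hu, List.length_eq_zero_iff.mp hv]
  | succ n ih =>
    intro u v hu hD
    rcases List.eq_nil_or_concat u with rfl | ⟨u₁, x, rfl⟩
    · simp at hu
    simp only [List.concat_eq_append] at hu hD ⊢
    have hx : x ∈ rD g f hI2 hB3 (mk' g f v) := by
      rw [← hD, mk'_snoc, rD_snoc]; exact Multiset.mem_cons_self _ _
    obtain ⟨w, hw⟩ := Q_right g f hI2 hB3 v x hx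
    rw [hw, ← mk'_snoc] at hD ⊢
    rw [mk'_snoc, mk'_snoc, rD_snoc, rD_snoc] at hD
    have hD₁ : rD g f hI2 hB3 (mk' g f u₁) = rD g f hI2 hB3 (mk' g f w) :=
      Multiset.map_injective (hf x).1 ((Multiset.cons_inj_right x).mp hD)
    have := ih u₁ w (by simpa using hu) hD₁
    rw [mk'_snoc, mk'_snoc, this]

lemma D_inj (hg : ∀ x, Function.Bijective (g x)) {m m' : M} (h : D g f hI1 hB1 m = D g f hI1 hB1 m') : m = m' := by
  obtain ⟨u, rfl⟩ := mk'_surj g f m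
  obtain ⟨v, rfl⟩ := mk'_surj g f m'
  exact P_left g f hI1 hB1 hg u.length u v rfl h

lemma rD_inj (hf : ∀ x, Function.Bijective (f x)) {m m' : M} (h : rD g f hI2 hB3 m = rD g f hI2 hB3 m') : m = m' := by
  obtain ⟨u, rfl⟩ := mk'_surj g f m
  obtain ⟨v, rfl⟩ := mk'_surj g f m'
  exact P_right g f hI2 hB3 hf u.length u v rfl h

lemma D_surj (hg : ∀ x, Function.Bijective (g x)) : ∀ (n : ℕ) (s : Multiset X), s.card = n → ∃ m : M, D g f hI1 hB1 m = s := by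
  intro n
  induction n with
  | zero => intro s hs; exact ⟨1, by rw [D_one, Multiset.card_eq_zero.mp hs]⟩
  | succ n ih =>
    intro s hs
    obtain ⟨x, hx⟩ := Multiset.card_pos_iff_exists_mem.mp (by rw [hs]; exact n.succ_pos)
    obtain ⟨t, rfl⟩ := Multiset.exists_cons_of_mem hx
    set σ := Function.surjInv (hg x).2 with hσ
    obtain ⟨m', hm'⟩ := ih (t.map σ) (by simp at hs ⊢; omega)
    refine ⟨oo x * m', ?_⟩
    rw [D_cons, hm', Multiset.map_map]
    congr 1
    rw [show (g x ∘ σ) = id from funext fun z => Function.surjInv_eq (hg x).2 z, Multiset.map_id]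

lemma rD_surj (hf : ∀ x, Function.Bijective (f x)) : ∀ (n : ℕ) (s : Multiset X), s.card = n → ∃ m : M, rD g f hI2 hB3 m = s := by
  intro n
  induction n with
  | zero => intro s hs; exact ⟨1, by rw [rD_one, Multiset.card_eq_zero.mp hs]⟩
  | succ n ih =>
    intro s hs
    obtain ⟨x, hx⟩ := Multiset.card_pos_iff_exists_mem.mp (by rw [hs]; exact n.succ_pos)
    obtain ⟨t, rfl⟩ := Multiset.exists_cons_of_mem hx
    set σ := Function.surjInv (hf x).2 with hσ
    obtain ⟨m', hm'⟩ := ih (t.map σ) (by simp at hs ⊢; omega)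
    refine ⟨m' * oo x, ?_⟩
    rw [rD_snoc, hm', Multiset.map_map]
    congr 1
    rw [show (f x ∘ σ) = id from funext fun z => Function.surjInv_eq (hf x).2 z, Multiset.map_id]

lemma ldvd_iff (hg : ∀ x, Function.Bijective (g x)) {m m' : M} : LDvd m m' ↔ D g f hI1 hB1 m ≤ D g f hI1 hB1 m' := by
  constructor
  · rintro ⟨c, rfl⟩
    rw [D_mul]
    exact Multiset.le_add_right _ _
  · obtain ⟨u, rfl⟩ := mk'_surj g f m
    obtain ⟨v, rfl⟩ := mk'_surj g f m'
    induction u generalizing v with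
    | nil => intro _; exact ⟨mk' g f v, (one_mul _).symm⟩
    | cons x u₁ ih =>
      intro h
      have hx : x ∈ D g f hI1 hB1 (mk' g f v) :=
        Multiset.mem_of_le h (by rw [mk'_cons, D_cons]; exact Multiset.mem_cons_self _ _)
      obtain ⟨w, hw⟩ := Q_left g f hI1 hB1 v x hx
      rw [hw, ← mk'_cons] at h
      rw [mk'_cons, mk'_cons, D_cons, D_cons] at h
      have h₁ : D g f hI1 hB1 (mk' g f u₁) ≤ D g f hI1 hB1 (mk' g f w) :=
        (Multiset.map_le_map_iff (hg x).1).mp ((Multiset.cons_le_cons_iff x).mp h)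
      obtain ⟨c, hc⟩ := ih w h₁
      exact ⟨c, by rw [hw, mk'_cons, hc, mul_assoc]⟩

lemma rdvd_iff (hf : ∀ x, Function.Bijective (f x)) {m m' : M} : RDvd m m' ↔ rD g f hI2 hB3 m ≤ rD g f hI2 hB3 m' := by
  constructor
  · rintro ⟨c, rfl⟩
    rw [rD_mul]
    exact Multiset.le_add_right _ _
  · obtain ⟨u, rfl⟩ := mk'_surj g f m
    obtain ⟨v, rfl⟩ := mk'_surj g f m'
    induction u using List.reverseRecOn generalizing v with
    | nil => intro _; exact ⟨mk' g f v, (mul_one _).symm⟩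
    | append_singleton u₁ x ih =>
      intro h
      have hx : x ∈ rD g f hI2 hB3 (mk' g f v) :=
        Multiset.mem_of_le h (by rw [mk'_snoc, rD_snoc]; exact Multiset.mem_cons_self _ _)
      obtain ⟨w, hw⟩ := Q_right g f hI2 hB3 v x hx
      rw [hw, ← mk'_snoc] at h
      rw [mk'_snoc, mk'_snoc, rD_snoc, rD_snoc] at h
      have h₁ : rD g f hI2 hB3 (mk' g f u₁) ≤ rD g f hI2 hB3 (mk' g f w) :=
        (Multiset.map_le_map_iff (hf x).1).mp ((Multiset.cons_le_cons_iff x).mp h)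
      obtain ⟨c, hc⟩ := ih w h₁
      exact ⟨c, by rw [hw, mk'_snoc, hc, ← mul_assoc]⟩

section Lcm
variable [DecidableEq X]

lemma rlcm_char (hg : ∀ x, Function.Bijective (g x)) (A : Finset X) (s : M) :
    IsRightLcmOfSet ((oo) '' ↑A) s ↔ D g f hI1 hB1 s = A.val := by
  constructor
  · rintro ⟨h1, h2⟩
    have hA_le : A.val ≤ D g f hI1 hB1 s := by
      rw [Multiset.le_iff_count]
      intro a
      by_cases haA : a ∈ A
      · have hd := (ldvd_iff g f hI1 hB1 hg).mp (h1 (oo a) ⟨a, haA, rfl⟩)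
        rw [D_of] at hd
        rw [Multiset.count_eq_one_of_mem A.nodup (Finset.mem_val.mpr haA)]
        exact Multiset.one_le_count_iff_mem.mpr (Multiset.singleton_le.mp hd)
      · simp [Multiset.count_eq_zero_of_notMem (fun h => haA (Finset.mem_val.mp h))]
    obtain ⟨m₀, hm₀⟩ := D_surj g f hI1 hB1 hg A.val.card A.val rfl
    have hcm : ∀ a ∈ (oo) '' ↑A, LDvd a m₀ := by
      rintro a ⟨x, hxA, rfl⟩
      refine (ldvd_iff g f hI1 hB1 hg).mpr ?_
      rw [hm₀, D_of]
      exact Multiset.singleton_le.mpr (Finset.mem_val.mpr hxA)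
    have hsm := (ldvd_iff g f hI1 hB1 hg).mp (h2 m₀ hcm)
    rw [hm₀] at hsm
    exact le_antisymm hsm hA_le
  · intro h
    constructor
    · rintro a ⟨x, hxA, rfl⟩
      refine (ldvd_iff g f hI1 hB1 hg).mpr ?_
      rw [D_of, h]
      exact Multiset.singleton_le.mpr (Finset.mem_val.mpr hxA)
    · intro m hm
      refine (ldvd_iff g f hI1 hB1 hg).mpr ?_
      rw [h, Multiset.le_iff_count]
      intro a
      by_cases haA : a ∈ A
      · have hd := (ldvd_iff g f hI1 hB1 hg).mp (hm (oo a) ⟨a, haA, rfl⟩)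
        rw [D_of] at hd
        rw [Multiset.count_eq_one_of_mem A.nodup (Finset.mem_val.mpr haA)]
        exact Multiset.one_le_count_iff_mem.mpr (Multiset.singleton_le.mp hd)
      · simp [Multiset.count_eq_zero_of_notMem (fun h => haA (Finset.mem_val.mp h))]

lemma llcm_char (hf : ∀ x, Function.Bijective (f x)) (B : Finset X) (s : M) :
    IsLeftLcmOfSet ((oo) '' ↑B) s ↔ rD g f hI2 hB3 s = B.val := by
  constructor
  · rintro ⟨h1, h2⟩
    have hB_le : B.val ≤ rD g f hI2 hB3 s := by
      rw [Multiset.le_iff_count]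
      intro a
      by_cases haB : a ∈ B
      · have hd := (rdvd_iff g f hI2 hB3 hf).mp (h1 (oo a) ⟨a, haB, rfl⟩)
        rw [rD_of] at hd
        rw [Multiset.count_eq_one_of_mem B.nodup (Finset.mem_val.mpr haB)]
        exact Multiset.one_le_count_iff_mem.mpr (Multiset.singleton_le.mp hd)
      · simp [Multiset.count_eq_zero_of_notMem (fun h => haB (Finset.mem_val.mp h))]
    obtain ⟨m₀, hm₀⟩ := rD_surj g f hI2 hB3 hf B.val.card B.val rfl
    have hcm : ∀ a ∈ (oo) '' ↑B, RDvd a m₀ := by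
      rintro a ⟨x, hxB, rfl⟩
      refine (rdvd_iff g f hI2 hB3 hf).mpr ?_
      rw [hm₀, rD_of]
      exact Multiset.singleton_le.mpr (Finset.mem_val.mpr hxB)
    have hsm := (rdvd_iff g f hI2 hB3 hf).mp (h2 m₀ hcm)
    rw [hm₀] at hsm
    exact le_antisymm hsm hB_le
  · intro h
    constructor
    · rintro a ⟨x, hxB, rfl⟩
      refine (rdvd_iff g f hI2 hB3 hf).mpr ?_
      rw [rD_of, h]
      exact Multiset.singleton_le.mpr (Finset.mem_val.mpr hxB)
    · intro m hm
      refine (rdvd_iff g f hI2 hB3 hf).mpr ?_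
      rw [h, Multiset.le_iff_count]
      intro a
      by_cases haB : a ∈ B
      · have hd := (rdvd_iff g f hI2 hB3 hf).mp (hm (oo a) ⟨a, haB, rfl⟩)
        rw [rD_of] at hd
        rw [Multiset.count_eq_one_of_mem B.nodup (Finset.mem_val.mpr haB)]
        exact Multiset.one_le_count_iff_mem.mpr (Multiset.singleton_le.mp hd)
      · simp [Multiset.count_eq_zero_of_notMem (fun h => haB (Finset.mem_val.mp h))]

end Lcm
end YB
end YBAux

/-- in the structure monoid `M(X,S)` of a finite non-degenerate symmetric
solution, every divisor `s` of the Garside element `Δ` is the right lcm of a unique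
subset `X_ℓ(s)` of `X` and the left lcm of a unique subset `X_r(s)` of `X`; moreover
`|X_ℓ(s)| = |X_r(s)|` and this common cardinality is the length of `s`. -/
theorem divisors_are_lcms_of_unique_subsets {X : Type*} [Fintype X] [DecidableEq X]
    (S : X × X → X × X) (g f : X → X → X)
    (hS : ∀ x y, S (x, y) = (g x y, f y x))
    (hbij : Function.Bijective S)
    (hinv : S ∘ S = id)
    (hbraid : map12 S ∘ map23 S ∘ map12 S = map23 S ∘ map12 S ∘ map23 S)
    (hg : ∀ x, Function.Bijective (g x)) (hf : ∀ x, Function.Bijective (f x))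
    (Δ : PresentedMonoid (ybMonRel g f))
    (hΔbal : BalancedElem Δ)
    (hΔr : IsRightLcmOfSet (Set.range (PresentedMonoid.of (ybMonRel g f))) Δ)
    (hΔl : IsLeftLcmOfSet (Set.range (PresentedMonoid.of (ybMonRel g f))) Δ)
    (len : PresentedMonoid (ybMonRel g f) → ℕ)
    (hlen1 : ∀ x : X, len (PresentedMonoid.of (ybMonRel g f) x) = 1)
    (hlenmul : ∀ a b, len (a * b) = len a + len b) :
    ∀ s : PresentedMonoid (ybMonRel g f), LDvd s Δ →
      (∃! A : Finset X, IsRightLcmOfSet (PresentedMonoid.of (ybMonRel g f) '' ↑A) s) ∧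
      (∃! B : Finset X, IsLeftLcmOfSet (PresentedMonoid.of (ybMonRel g f) '' ↑B) s) ∧
      ∀ A B : Finset X,
        IsRightLcmOfSet (PresentedMonoid.of (ybMonRel g f) '' ↑A) s →
        IsLeftLcmOfSet (PresentedMonoid.of (ybMonRel g f) '' ↑B) s →
        A.card = B.card ∧ A.card = len s := by
  classical
  -- consequences of involutivity
  have hI : ∀ x y : X, g (g x y) (f y x) = x ∧ f (f y x) (g x y) = y := by
    intro x y
    have h := congrFun hinv (x, y)
    rw [Function.comp_apply, hS, hS, id_eq, Prod.mk.injEq] at h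
    exact h
  have hI1 : ∀ x y, g (g x y) (f y x) = x := fun x y => (hI x y).1
  have hI2 : ∀ x y, f (f y x) (g x y) = y := fun x y => (hI x y).2
  -- consequences of the braid relation
  have hBr : ∀ x y z : X,
      g (g x y) (g (f y x) z) = g x (g y z) ∧
      f z (f y x) = f (f z y) (f (g y z) x) := by
    intro x y z
    have h := congrFun hbraid (x, y, z)
    simp only [Function.comp_apply, map12, map23, hS, Prod.mk.injEq] at h
    exact ⟨h.1, h.2.2⟩
  have hB1 : ∀ x y z, g x (g y z) = g (g x y) (g (f y x) z) := fun x y z => (hBr x y z).1.symm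
  have hB3 : ∀ x y z, f y (f x z) = f (f y x) (f (g x y) z) := fun x y z => (hBr z x y).2
  -- length facts
  have len_one : len 1 = 0 := by
    have := hlenmul 1 1
    rw [mul_one] at this
    omega
  have len_mk' : ∀ l : List X, len (YBAux.mk' g f l) = l.length := by
    intro l
    induction l with
    | nil => rw [YBAux.mk'_nil]; exact len_one
    | cons x l ih => rw [YBAux.mk'_cons, hlenmul, hlen1, ih, List.length_cons]; omega
  have len_card : ∀ m : PresentedMonoid (ybMonRel g f),
      len m = (YBAux.D g f hI1 hB1 m).card := by
    intro m
    obtain ⟨l, rfl⟩ := YBAux.mk'_surj g f m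
    rw [len_mk', YBAux.card_D_mk']
  have len_rcard : ∀ m : PresentedMonoid (ybMonRel g f),
      len m = (YBAux.rD g f hI2 hB3 m).card := by
    intro m
    obtain ⟨l, rfl⟩ := YBAux.mk'_surj g f m
    rw [len_mk', YBAux.card_rD_mk']
  -- the invariant of Δ
  have hDΔ : YBAux.D g f hI1 hB1 Δ = Finset.univ.val := by
    apply le_antisymm
    · obtain ⟨m₀, hm₀⟩ :=
        YBAux.D_surj g f hI1 hB1 hg (Finset.univ.val : Multiset X).card Finset.univ.val rfl
      have hcm : ∀ a ∈ Set.range (PresentedMonoid.of (ybMonRel g f)), LDvd a m₀ := by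
        rintro a ⟨x, rfl⟩
        refine (YBAux.ldvd_iff g f hI1 hB1 hg).mpr ?_
        rw [hm₀, YBAux.D_of]
        exact Multiset.singleton_le.mpr (Finset.mem_val.mpr (Finset.mem_univ x))
      have := (YBAux.ldvd_iff g f hI1 hB1 hg).mp (hΔr.2 m₀ hcm)
      rwa [hm₀] at this
    · rw [Multiset.le_iff_count]
      intro a
      rw [Multiset.count_eq_one_of_mem Finset.univ.nodup (Finset.mem_val.mpr (Finset.mem_univ a))]
      have := (YBAux.ldvd_iff g f hI1 hB1 hg).mp (hΔr.1 _ ⟨a, rfl⟩)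
      rw [YBAux.D_of] at this
      exact Multiset.one_le_count_iff_mem.mpr (Multiset.singleton_le.mp this)
  have hrDΔ : YBAux.rD g f hI2 hB3 Δ = Finset.univ.val := by
    apply le_antisymm
    · obtain ⟨m₀, hm₀⟩ :=
        YBAux.rD_surj g f hI2 hB3 hf (Finset.univ.val : Multiset X).card Finset.univ.val rfl
      have hcm : ∀ a ∈ Set.range (PresentedMonoid.of (ybMonRel g f)), RDvd a m₀ := by
        rintro a ⟨x, rfl⟩
        refine (YBAux.rdvd_iff g f hI2 hB3 hf).mpr ?_
        rw [hm₀, YBAux.rD_of]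
        exact Multiset.singleton_le.mpr (Finset.mem_val.mpr (Finset.mem_univ x))
      have := (YBAux.rdvd_iff g f hI2 hB3 hf).mp (hΔl.2 m₀ hcm)
      rwa [hm₀] at this
    · rw [Multiset.le_iff_count]
      intro a
      rw [Multiset.count_eq_one_of_mem Finset.univ.nodup (Finset.mem_val.mpr (Finset.mem_univ a))]
      have := (YBAux.rdvd_iff g f hI2 hB3 hf).mp (hΔl.1 _ ⟨a, rfl⟩)
      rw [YBAux.rD_of] at this
      exact Multiset.one_le_count_iff_mem.mpr (Multiset.singleton_le.mp this)
  -- main argument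
  intro s hs
  have hs' : RDvd s Δ := by
    have : s ∈ LDiv Δ := hs
    rw [hΔbal] at this
    exact this
  have hsub : YBAux.D g f hI1 hB1 s ≤ Finset.univ.val := by
    rw [← hDΔ]; exact (YBAux.ldvd_iff g f hI1 hB1 hg).mp hs
  have hnd : (YBAux.D g f hI1 hB1 s).Nodup := Multiset.nodup_of_le hsub Finset.univ.nodup
  have hsubr : YBAux.rD g f hI2 hB3 s ≤ Finset.univ.val := by
    rw [← hrDΔ]; exact (YBAux.rdvd_iff g f hI2 hB3 hf).mp hs'
  have hndr : (YBAux.rD g f hI2 hB3 s).Nodup := Multiset.nodup_of_le hsubr Finset.univ.nodup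
  refine ⟨⟨⟨YBAux.D g f hI1 hB1 s, hnd⟩, ?_, ?_⟩, ⟨⟨YBAux.rD g f hI2 hB3 s, hndr⟩, ?_, ?_⟩, ?_⟩
  · exact (YBAux.rlcm_char g f hI1 hB1 hg _ s).mpr rfl
  · intro A' h'
    have := (YBAux.rlcm_char g f hI1 hB1 hg A' s).mp h'
    exact Finset.val_inj.mp this.symm
  · exact (YBAux.llcm_char g f hI2 hB3 hf _ s).mpr rfl
  · intro B' h'
    have := (YBAux.llcm_char g f hI2 hB3 hf B' s).mp h'
    exact Finset.val_inj.mp this.symm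
  · intro A B hA hB
    have hA' := (YBAux.rlcm_char g f hI1 hB1 hg A s).mp hA
    have hB' := (YBAux.llcm_char g f hI2 hB3 hf B s).mp hB
    constructor
    · show A.val.card = B.val.card
      rw [← hA', ← hB', ← len_card, ← len_rcard]
    · show A.val.card = len s
      rw [← hA', ← len_card]
end

section
/- Let (X,S) be a non-degenerate symmetric solution with X finite, and Y ⊆ X an invariant subset. Let δ be the right lcm of Y in the structure monoid M. Then δ is a left divisor of the Garside element Δ, δ is balanced, and the support of δ (the set X ∩ Div(δ)) equals Y. -/
@[ext] structure NN (X : Type*) where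
  vec : X → ℕ
  perm : Equiv.Perm X

namespace NN
variable {X : Type*}
instance : One (NN X) := ⟨⟨0, 1⟩⟩
instance : Mul (NN X) := ⟨fun a b => ⟨a.vec + b.vec ∘ a.perm.symm, a.perm * b.perm⟩⟩
@[simp] lemma vec_mul (a b : NN X) : (a*b).vec = a.vec + b.vec ∘ a.perm.symm := rfl
@[simp] lemma perm_mul (a b : NN X) : (a*b).perm = a.perm * b.perm := rfl
@[simp] lemma vec_one : (1 : NN X).vec = 0 := rfl
@[simp] lemma perm_one : (1 : NN X).perm = 1 := rfl
lemma mul_symm_apply (p q : Equiv.Perm X) (z : X) : (p * q).symm z = q.symm (p.symm z) := rfl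
instance : Monoid (NN X) where
  mul_assoc a b c := by
    ext z
    · simp [mul_symm_apply, Nat.add_assoc]
    · simp [mul_assoc]
  one_mul a := by ext z <;> simp <;> rfl
  mul_one a := by ext z <;> simp
end NN

namespace YBA

open FreeMonoid

variable {X : Type*} [DecidableEq X]

def ee (x : X) : X → ℕ := fun z => if z = x then 1 else 0

@[simp] lemma ee_self (x : X) : ee x x = 1 := by simp [ee]
lemma ee_ne {x z : X} (h : z ≠ x) : ee x z = 0 := by simp [ee, h]

variable (g f : X → X → X)

noncomputable def lam (hgb : ∀ x, Function.Bijective (g x)) (x : X) : Equiv.Perm X :=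
  Equiv.ofBijective (g x) (hgb x)

variable (hgb : ∀ x, Function.Bijective (g x))

@[simp] lemma lam_apply (x z : X) : lam g hgb x z = g x z := rfl

lemma lam_symm_apply_eq {x z y : X} : (lam g hgb x).symm z = y ↔ z = g x y := by
  rw [Equiv.symm_apply_eq]; rfl

lemma lam_symm_g {x y : X} : (lam g hgb x).symm (g x y) = y :=
  (lam_symm_apply_eq g hgb).mpr rfl

noncomputable def phi (x : X) : NN X := ⟨ee x, lam g hgb x⟩

variable (hA1 : ∀ x y, g (g x y) (f y x) = x)
  (hA2 : ∀ x y z, g (g x y) (g (f y x) z) = g x (g y z))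

noncomputable def theta : PresentedMonoid (ybMonRel g f) →* NN X :=
  PresentedMonoid.lift (phi g hgb) (by
    rintro a b ⟨x, y, rfl, rfl⟩
    simp only [map_mul, FreeMonoid.lift_eval_of]
    ext z
    · show ee x z + ee y ((lam g hgb x).symm z)
        = ee (g x y) z + ee (f y x) ((lam g hgb (g x y)).symm z)
      have h1 : (ee y ((lam g hgb x).symm z)) = ee (g x y) z := by
        by_cases h : (lam g hgb x).symm z = y
        · rw [h, ee_self, ee, if_pos ((lam_symm_apply_eq g hgb).mp h)]
        · rw [ee_ne h, ee, if_neg (fun hz => h (by rw [hz]; exact lam_symm_g g hgb))]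
      have h2 : (ee (f y x) ((lam g hgb (g x y)).symm z)) = ee x z := by
        by_cases h : (lam g hgb (g x y)).symm z = f y x
        · rw [h, ee_self, ee, if_pos (by rw [(lam_symm_apply_eq g hgb).mp h, hA1])]
        · rw [ee_ne h, ee, if_neg (fun hz => h (by
            rw [hz]; exact (lam_symm_apply_eq g hgb).mpr (hA1 x y).symm))]
      rw [h1, h2, Nat.add_comm]
    · show g x (g y z) = g (g x y) (g (f y x) z)
      rw [hA2])

@[simp] lemma theta_of (x : X) :
    theta g f hgb hA1 hA2 (PresentedMonoid.of (ybMonRel g f) x) = phi g hgb x := rfl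



set_option linter.unusedSectionVars false

noncomputable def JJ (m : PresentedMonoid (ybMonRel g f)) : X → ℕ :=
  (theta g f hgb hA1 hA2 m).vec

noncomputable def pp (m : PresentedMonoid (ybMonRel g f)) : Equiv.Perm X :=
  (theta g f hgb hA1 hA2 m).perm

lemma JJ_mul_apply (a b : PresentedMonoid (ybMonRel g f)) (z : X) :
    JJ g f hgb hA1 hA2 (a * b) z
      = JJ g f hgb hA1 hA2 a z + JJ g f hgb hA1 hA2 b ((pp g f hgb hA1 hA2 a).symm z) := by
  unfold JJ pp; rw [map_mul]; rfl

lemma JJ_one : JJ g f hgb hA1 hA2 1 = 0 := by unfold JJ; rw [map_one]; rfl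

lemma JJ_of_apply (x : X) (z : X) :
    JJ g f hgb hA1 hA2 (PresentedMonoid.of (ybMonRel g f) x) z = ee x z := rfl

lemma pp_of (x : X) : pp g f hgb hA1 hA2 (PresentedMonoid.of (ybMonRel g f) x) = lam g hgb x := rfl

lemma mk_of (x : X) :
    PresentedMonoid.mk (ybMonRel g f) (FreeMonoid.of x) = PresentedMonoid.of (ybMonRel g f) x := rfl

lemma mk_eq_of_rel {a b : FreeMonoid X} (h : ybMonRel g f a b) :
    PresentedMonoid.mk (ybMonRel g f) a = PresentedMonoid.mk (ybMonRel g f) b :=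
  Quotient.sound (ConGen.Rel.of _ _ h)

lemma of_mul_of (x y : X) :
    PresentedMonoid.of (ybMonRel g f) x * PresentedMonoid.of (ybMonRel g f) y
      = PresentedMonoid.of (ybMonRel g f) (g x y) * PresentedMonoid.of (ybMonRel g f) (f y x) := by
  rw [← mk_of, ← mk_of, ← mk_of, ← mk_of, ← map_mul, ← map_mul]
  exact mk_eq_of_rel g f ⟨x, y, rfl, rfl⟩

section Fin
variable [Fintype X]

lemma sum_ee (x : X) : ∑ z, ee x z = 1 := by simp [ee]

lemma sum_JJ_mul (a b : PresentedMonoid (ybMonRel g f)) :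
    ∑ z, JJ g f hgb hA1 hA2 (a * b) z
      = ∑ z, JJ g f hgb hA1 hA2 a z + ∑ z, JJ g f hgb hA1 hA2 b z := by
  simp only [JJ_mul_apply, Finset.sum_add_distrib]
  congr 1
  exact Equiv.sum_comp (pp g f hgb hA1 hA2 a).symm _

lemma sum_JJ_mk (w : FreeMonoid X) :
    ∑ z, JJ g f hgb hA1 hA2 (PresentedMonoid.mk (ybMonRel g f) w) z = w.length := by
  induction w using FreeMonoid.recOn with
  | one => rw [map_one]; simp [JJ_one]
  | of_mul x xs ih =>
    rw [map_mul, sum_JJ_mul, mk_of]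
    simp only [JJ_of_apply, sum_ee, ih, FreeMonoid.length_mul, FreeMonoid.length_of]

lemma eq_one_of_sum_JJ_eq_zero (a : PresentedMonoid (ybMonRel g f))
    (h : ∑ z, JJ g f hgb hA1 hA2 a z = 0) : a = 1 := by
  obtain ⟨w, rfl⟩ := PresentedMonoid.surjective_mk a
  rw [sum_JJ_mk] at h
  rw [FreeMonoid.length_eq_zero.mp h, map_one]

end Fin

lemma dvd_of_pos (m : PresentedMonoid (ybMonRel g f)) (z : X)
    (h : 0 < JJ g f hgb hA1 hA2 m z) : LDvd (PresentedMonoid.of (ybMonRel g f) z) m := by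
  obtain ⟨w, rfl⟩ := PresentedMonoid.surjective_mk m
  induction w using FreeMonoid.recOn generalizing z with
  | one => rw [map_one, JJ_one] at h; simp at h
  | of_mul x xs ih =>
    rw [map_mul, mk_of] at *
    rw [JJ_mul_apply, JJ_of_apply, pp_of] at h
    by_cases hz : z = x
    · exact ⟨PresentedMonoid.mk _ xs, by rw [hz]⟩
    · rw [ee_ne hz, Nat.zero_add] at h
      obtain ⟨c, hc⟩ := ih _ h
      refine ⟨PresentedMonoid.of (ybMonRel g f) (f ((lam g hgb x).symm z) x) * c, ?_⟩
      rw [hc, ← mul_assoc, ← mul_assoc, of_mul_of g f]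
      congr 2
      exact congrArg _ (Equiv.apply_symm_apply (lam g hgb x) z)

lemma ldvd_of_le_one [Fintype X] :
    ∀ (n : ℕ) (a m : PresentedMonoid (ybMonRel g f)),
      (∑ z, JJ g f hgb hA1 hA2 a z = n) → (∀ z, JJ g f hgb hA1 hA2 a z ≤ 1) →
      (∀ z, 0 < JJ g f hgb hA1 hA2 a z → 0 < JJ g f hgb hA1 hA2 m z) → LDvd a m := by
  intro n
  induction n with
  | zero =>
    intro a m hsum _ _
    exact ⟨m, by rw [eq_one_of_sum_JJ_eq_zero g f hgb hA1 hA2 a hsum, one_mul]⟩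
  | succ n ih =>
    intro a m hsum h01 hsub
    have hex : ∃ z, 0 < JJ g f hgb hA1 hA2 a z := by
      by_contra hno
      push_neg at hno
      simp only [Nat.le_zero] at hno
      rw [Finset.sum_eq_zero (fun z _ => hno z)] at hsum
      exact (Nat.succ_ne_zero n) hsum.symm
    obtain ⟨z, hz⟩ := hex
    obtain ⟨a2, rfl⟩ := dvd_of_pos g f hgb hA1 hA2 a z hz
    obtain ⟨m2, rfl⟩ := dvd_of_pos g f hgb hA1 hA2 m z (hsub z hz)
    have key : ∀ (b : PresentedMonoid (ybMonRel g f)) (ζ : X),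
        JJ g f hgb hA1 hA2 (PresentedMonoid.of (ybMonRel g f) z * b) (lam g hgb z ζ)
          = ee z (lam g hgb z ζ) + JJ g f hgb hA1 hA2 b ζ := by
      intro b ζ
      rw [JJ_mul_apply, JJ_of_apply, pp_of, Equiv.symm_apply_apply]
    have hsum2 : ∑ ζ, JJ g f hgb hA1 hA2 a2 ζ = n := by
      rw [sum_JJ_mul] at hsum
      have : ∑ ζ, JJ g f hgb hA1 hA2 (PresentedMonoid.of (ybMonRel g f) z) ζ = 1 := by
        simp only [JJ_of_apply]; exact sum_ee z
      omega
    have h012 : ∀ ζ, JJ g f hgb hA1 hA2 a2 ζ ≤ 1 := by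
      intro ζ
      have := key a2 ζ
      have h := h01 (lam g hgb z ζ)
      omega
    have hsub2 : ∀ ζ, 0 < JJ g f hgb hA1 hA2 a2 ζ → 0 < JJ g f hgb hA1 hA2 m2 ζ := by
      intro ζ hζ
      have ka := key a2 ζ
      have km := key m2 ζ
      by_cases hc : lam g hgb z ζ = z
      · exfalso
        rw [hc, ee_self] at ka
        have h2 := h01 z
        rw [ka] at h2
        omega
      · rw [ee_ne hc] at ka km
        have := hsub (lam g hgb z ζ) (by omega)
        omega
    obtain ⟨c, hc⟩ := ih a2 m2 hsum2 h012 hsub2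
    exact ⟨c, by rw [hc, mul_assoc]⟩



lemma pos_of_dvd (m : PresentedMonoid (ybMonRel g f)) (z : X)
    (h : LDvd (PresentedMonoid.of (ybMonRel g f) z) m) : 0 < JJ g f hgb hA1 hA2 m z := by
  obtain ⟨c, rfl⟩ := h
  rw [JJ_mul_apply, JJ_of_apply, ee_self]
  omega

section Pure

def Pure (Y : Set X) (w : FreeMonoid X) : Prop := ∀ a ∈ w, a ∈ Y

variable (Y : Set X)

omit [DecidableEq X] in
lemma pure_one : Pure Y (1 : FreeMonoid X) := fun a ha => absurd ha FreeMonoid.notMem_one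

omit [DecidableEq X] in
lemma pure_mul {a b : FreeMonoid X} : Pure Y (a * b) ↔ (Pure Y a ∧ Pure Y b) := by
  unfold Pure
  simp only [FreeMonoid.mem_mul]
  constructor
  · intro h; exact ⟨fun m hm => h m (Or.inl hm), fun m hm => h m (Or.inr hm)⟩
  · rintro ⟨h1, h2⟩ m (hm | hm)
    exacts [h1 m hm, h2 m hm]

omit [DecidableEq X] in
lemma pure_of {x : X} : Pure Y (FreeMonoid.of x) ↔ x ∈ Y := by
  unfold Pure
  simp [FreeMonoid.mem_of]

omit [DecidableEq X] in
lemma pure_iff_of_mk_eq (hrelY : ∀ x y : X, (x ∈ Y ∧ y ∈ Y) ↔ (g x y ∈ Y ∧ f y x ∈ Y))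
    {w v : FreeMonoid X}
    (h : PresentedMonoid.mk (ybMonRel g f) w = PresentedMonoid.mk (ybMonRel g f) v) :
    Pure Y w ↔ Pure Y v := by
  have hle : conGen (ybMonRel g f) ≤
      (⟨⟨fun a b => (Pure Y a ↔ Pure Y b), ⟨fun _ => Iff.rfl, Iff.symm, Iff.trans⟩⟩,
        fun h1 h2 => by
          show Pure Y _ ↔ Pure Y _
          rw [pure_mul, pure_mul]
          exact and_congr h1 h2⟩ : Con (FreeMonoid X)) := by
    apply Con.conGen_le.mpr
    rintro a b ⟨x, y, rfl, rfl⟩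
    show Pure Y _ ↔ Pure Y _
    rw [pure_mul, pure_mul, pure_of, pure_of, pure_of, pure_of]
    exact hrelY x y
  exact hle (Quotient.exact h)

omit [DecidableEq X] in
lemma exists_pure_rep (hrelY : ∀ x y : X, (x ∈ Y ∧ y ∈ Y) ↔ (g x y ∈ Y ∧ f y x ∈ Y))
    {w : FreeMonoid X} (hw : Pure Y w) {a b : PresentedMonoid (ybMonRel g f)}
    (h : PresentedMonoid.mk (ybMonRel g f) w = a * b) :
    ∃ u v : FreeMonoid X, a = PresentedMonoid.mk (ybMonRel g f) u
      ∧ b = PresentedMonoid.mk (ybMonRel g f) v ∧ Pure Y u ∧ Pure Y v := by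
  obtain ⟨u, rfl⟩ := PresentedMonoid.surjective_mk a
  obtain ⟨v, rfl⟩ := PresentedMonoid.surjective_mk b
  rw [← map_mul] at h
  have := (pure_iff_of_mk_eq g f Y hrelY h.symm).mpr hw
  rw [pure_mul] at this
  exact ⟨u, v, rfl, rfl, this.1, this.2⟩

lemma JJ_eq_zero_of_pure (hYg : ∀ x y, x ∈ Y → y ∈ Y → g x y ∈ Y)
    {w : FreeMonoid X} (hw : Pure Y w) {z : X} (hz : z ∉ Y) :
    JJ g f hgb hA1 hA2 (PresentedMonoid.mk (ybMonRel g f) w) z = 0 := by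
  induction w using FreeMonoid.recOn generalizing z with
  | one => rw [map_one, JJ_one]; rfl
  | of_mul x xs ih =>
    rw [pure_mul] at hw
    have hx : x ∈ Y := (pure_of Y).mp hw.1
    rw [map_mul, mk_of, JJ_mul_apply, JJ_of_apply, pp_of]
    have h1 : ee x z = 0 := ee_ne (fun hzx => hz (hzx ▸ hx))
    have h2 : (lam g hgb x).symm z ∉ Y := by
      intro hmem
      exact hz (by
        have := hYg x _ hx hmem
        rwa [show g x ((lam g hgb x).symm z) = z from Equiv.apply_symm_apply (lam g hgb x) z]
          at this)
    rw [h1, ih hw.2 h2]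

lemma lam_symm_mem [Fintype X] (hYg : ∀ x y, x ∈ Y → y ∈ Y → g x y ∈ Y)
    {a y : X} (ha : a ∈ Y) (hy : y ∈ Y) : (lam g hgb a).symm y ∈ Y := by
  have himg : g a '' Y = Y := by
    apply Set.eq_of_subset_of_ncard_le
    · rintro _ ⟨b, hb, rfl⟩
      exact hYg a b ha hb
    · rw [Set.ncard_image_of_injective Y (hgb a).1]
    · exact Y.toFinite
  have : y ∈ g a '' Y := himg.symm ▸ hy
  obtain ⟨b, hb, hba⟩ := this
  rwa [show (lam g hgb a).symm y = b from (lam_symm_apply_eq g hgb).mpr hba.symm]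

include hgb in
lemma exists_head [Fintype X] (hYg : ∀ x y, x ∈ Y → y ∈ Y → g x y ∈ Y)
    (w : FreeMonoid X) (hw : Pure Y w) :
    ∀ y ∈ Y, ∃ c ∈ Y, ∃ d, PresentedMonoid.mk (ybMonRel g f) (w * FreeMonoid.of c)
      = PresentedMonoid.of (ybMonRel g f) y * d := by
  induction w using FreeMonoid.recOn with
  | one =>
    intro y hy
    exact ⟨y, hy, 1, by rw [one_mul, mk_of, mul_one]⟩
  | of_mul x xs ih =>
    intro y hy
    rw [pure_mul] at hw
    have hx : x ∈ Y := (pure_of Y).mp hw.1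
    set b := (lam g hgb x).symm y with hbdef
    have hb : b ∈ Y := lam_symm_mem g hgb Y hYg hx hy
    obtain ⟨c, hc, d, hd⟩ := ih hw.2 b hb
    refine ⟨c, hc, PresentedMonoid.of (ybMonRel g f) (f b x) * d, ?_⟩
    rw [mul_assoc, map_mul, mk_of, hd, ← mul_assoc, ← mul_assoc, of_mul_of g f]
    have hgb' : g x b = y := Equiv.apply_symm_apply (lam g hgb x) y
    rw [hgb']

include hgb in
lemma exists_common_mul [Fintype X] (hYg : ∀ x y, x ∈ Y → y ∈ Y → g x y ∈ Y) :
    ∀ L : List X, (∀ y ∈ L, y ∈ Y) → ∃ w : FreeMonoid X, Pure Y w ∧ w.length = L.length ∧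
      ∀ y ∈ L, LDvd (PresentedMonoid.of (ybMonRel g f) y) (PresentedMonoid.mk (ybMonRel g f) w) := by
  intro L
  induction L with
  | nil => exact fun _ => ⟨1, pure_one Y, rfl, fun y hy => absurd hy List.not_mem_nil⟩
  | cons y L ih =>
    intro hL
    obtain ⟨w, hw, hlen, hdvd⟩ := ih (fun z hz => hL z (List.mem_cons_of_mem y hz))
    have hy : y ∈ Y := hL y List.mem_cons_self
    obtain ⟨c, hc, d, hd⟩ := exists_head g f hgb Y hYg w hw y hy
    refine ⟨w * FreeMonoid.of c, (pure_mul Y).mpr ⟨hw, (pure_of Y).mpr hc⟩, ?_, ?_⟩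
    · rw [FreeMonoid.length_mul, hlen, FreeMonoid.length_of, List.length_cons]
    · intro z hz
      rcases List.mem_cons.mp hz with hz | hz
      · exact ⟨d, by rw [hz, hd]⟩
      · obtain ⟨e, he⟩ := hdvd z hz
        exact ⟨e * PresentedMonoid.mk (ybMonRel g f) (FreeMonoid.of c),
          by rw [map_mul, he, mul_assoc]⟩

end Pure


section Pinch
variable [Fintype X]

lemma pinch1 (T : Finset X) (v : X → ℕ) (hsupp : ∀ y ∈ T, 1 ≤ v y)
    (hsum : ∑ z, v z ≤ T.card) : ∀ z, v z = if z ∈ T then 1 else 0 := by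
  have h1 : T.card ≤ ∑ z ∈ T, v z := by
    rw [Finset.card_eq_sum_ones]
    exact Finset.sum_le_sum hsupp
  have h2 : ∑ z ∈ T, v z ≤ ∑ z, v z := Finset.sum_le_sum_of_subset (Finset.subset_univ T)
  have h3 : ∑ z ∈ T, v z = T.card := le_antisymm (le_trans h2 hsum) h1
  have h4 : ∑ z ∈ Finset.univ \ T, v z = 0 := by
    have := Finset.sum_sdiff (f := v) (Finset.subset_univ T)
    omega
  intro z
  by_cases hz : z ∈ T
  · rw [if_pos hz]
    by_contra hne
    have hgt : 1 < v z := by have := hsupp z hz; omega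
    have hlt : ∑ _i ∈ T, 1 < ∑ i ∈ T, v i := Finset.sum_lt_sum hsupp ⟨z, hz, hgt⟩
    rw [← Finset.card_eq_sum_ones] at hlt
    omega
  · rw [if_neg hz]
    exact Finset.sum_eq_zero_iff.mp h4 z (Finset.mem_sdiff.mpr ⟨Finset.mem_univ z, hz⟩)

lemma pinch2 (T : Finset X) (v : X → ℕ) (hle : ∀ z, v z ≤ 1)
    (h0 : ∀ z ∉ T, v z = 0) (hsum : T.card ≤ ∑ z, v z) :
    ∀ z, v z = if z ∈ T then 1 else 0 := by
  have h1 : ∑ z ∈ T, v z = ∑ z, v z :=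
    Finset.sum_subset (Finset.subset_univ T) (fun x _ hx => h0 x hx)
  have h2 : ∑ z ∈ T, v z ≤ T.card := by
    rw [Finset.card_eq_sum_ones]
    exact Finset.sum_le_sum (fun i _ => hle i)
  intro z
  by_cases hz : z ∈ T
  · rw [if_pos hz]
    by_contra hne
    have hlt : v z < 1 := by have := hle z; omega
    have hlt2 : ∑ i ∈ T, v i < ∑ _i ∈ T, 1 :=
      Finset.sum_lt_sum (fun i _ => hle i) ⟨z, hz, hlt⟩
    rw [← Finset.card_eq_sum_ones] at hlt2
    omega
  · rw [if_neg hz]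
    exact h0 z hz

end Pinch

section Rev

noncomputable def rhom : PresentedMonoid (ybMonRel g f) →* (PresentedMonoid (ybMonRel f g))ᵐᵒᵖ :=
  PresentedMonoid.lift (fun x => MulOpposite.op (PresentedMonoid.of (ybMonRel f g) x)) (by
    rintro a b ⟨x, y, rfl, rfl⟩
    simp only [map_mul, FreeMonoid.lift_eval_of]
    rw [← MulOpposite.op_mul, ← MulOpposite.op_mul]
    congr 1
    exact of_mul_of f g y x)

noncomputable def rv (m : PresentedMonoid (ybMonRel g f)) : PresentedMonoid (ybMonRel f g) :=
  (rhom g f m).unop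

lemma rv_mk (w : FreeMonoid X) :
    rv g f (PresentedMonoid.mk (ybMonRel g f) w)
      = PresentedMonoid.mk (ybMonRel f g) w.reverse := by
  induction w using FreeMonoid.recOn with
  | one =>
    show (rhom g f 1).unop = _
    rw [map_one]
    rfl
  | of_mul x xs ih =>
    show (rhom g f (PresentedMonoid.mk (ybMonRel g f) (FreeMonoid.of x * xs))).unop = _
    rw [map_mul, map_mul, MulOpposite.unop_mul]
    have h1 : (rhom g f (PresentedMonoid.mk (ybMonRel g f) (FreeMonoid.of x))).unop
        = PresentedMonoid.mk (ybMonRel f g) (FreeMonoid.of x) := rfl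
    rw [h1]
    show rv g f (PresentedMonoid.mk (ybMonRel g f) xs) * _ = _
    rw [ih, FreeMonoid.reverse_mul, FreeMonoid.reverse_of, map_mul]

lemma rv_mul (a b : PresentedMonoid (ybMonRel g f)) : rv g f (a * b) = rv g f b * rv g f a := by
  unfold rv
  rw [map_mul, MulOpposite.unop_mul]

lemma rv_of (x : X) : rv g f (PresentedMonoid.of (ybMonRel g f) x)
    = PresentedMonoid.of (ybMonRel f g) x := rfl

lemma rv_rv (m : PresentedMonoid (ybMonRel g f)) : rv f g (rv g f m) = m := by
  obtain ⟨w, rfl⟩ := PresentedMonoid.surjective_mk m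
  rw [rv_mk, rv_mk, FreeMonoid.reverse_reverse]

lemma rdvd_iff_ldvd_rv (a b : PresentedMonoid (ybMonRel g f)) :
    RDvd a b ↔ LDvd (rv g f a) (rv g f b) := by
  constructor
  · rintro ⟨c, rfl⟩
    exact ⟨rv g f c, by rw [rv_mul]⟩
  · rintro ⟨c, hc⟩
    refine ⟨rv f g c, ?_⟩
    have := congrArg (rv f g) hc
    rw [rv_rv, rv_mul, rv_rv] at this
    exact this

end Rev

end YBA

/-- for a finite non-degenerate symmetric solution `(X,S)` and an invariant
subset `Y ⊆ X`, the right lcm `δ` of `Y` in the structure monoid is a left divisor of the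
Garside element `Δ`, is balanced, and its support `X ∩ Div(δ)` equals `Y`. -/
theorem rightLcm_of_invariant_balanced {X : Type*} [Fintype X]
    (S : X × X → X × X) (g f : X → X → X)
    (hS : ∀ x y, S (x, y) = (g x y, f y x))
    (hbij : Function.Bijective S)
    (hinv : S ∘ S = id)
    (hbraid : map12 S ∘ map23 S ∘ map12 S = map23 S ∘ map12 S ∘ map23 S)
    (hg : ∀ x, Function.Bijective (g x)) (hf : ∀ x, Function.Bijective (f x))
    (Δ : PresentedMonoid (ybMonRel g f))
    (hΔbal : BalancedElem Δ)
    (hΔr : IsRightLcmOfSet (Set.range (PresentedMonoid.of (ybMonRel g f))) Δ)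
    (hΔl : IsLeftLcmOfSet (Set.range (PresentedMonoid.of (ybMonRel g f))) Δ)
    (Y : Set X) (hY : ∀ p : X × X, p ∈ Y ×ˢ Y → S p ∈ Y ×ˢ Y)
    (δ : PresentedMonoid (ybMonRel g f))
    (hδ : IsRightLcmOfSet (PresentedMonoid.of (ybMonRel g f) '' Y) δ) :
    LDvd δ Δ ∧ BalancedElem δ ∧
      {x : X | LDvd (PresentedMonoid.of (ybMonRel g f) x) δ} = Y := by
  classical
  -- involutivity identities
  have inv' : ∀ x y : X, (g (g x y) (f y x), f (f y x) (g x y)) = (x, y) := by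
    intro x y
    have h := congrFun hinv (x, y)
    simp only [Function.comp_apply, hS, id_eq] at h
    exact h
  have inv1 : ∀ x y, g (g x y) (f y x) = x := fun x y => (Prod.ext_iff.mp (inv' x y)).1
  have inv2 : ∀ x y, f (f y x) (g x y) = y := fun x y => (Prod.ext_iff.mp (inv' x y)).2
  -- braid identities
  have braid := fun (x y z : X) => congrFun hbraid (x, y, z)
  simp only [Function.comp_apply, map12, map23, hS] at braid
  have A2g : ∀ x y z, g (g x y) (g (f y x) z) = g x (g y z) :=
    fun x y z => (Prod.ext_iff.mp (braid x y z)).1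
  have braid3 : ∀ x y z, f z (f y x) = f (f z y) (f (g y z) x) :=
    fun x y z => (Prod.ext_iff.mp (Prod.ext_iff.mp (braid x y z)).2).2
  have A1f : ∀ x y, f (f x y) (g y x) = x := fun x y => inv2 y x
  have A2f : ∀ x y z, f (f x y) (f (g y x) z) = f x (f y z) := fun x y z => (braid3 z y x).symm
  -- invariance
  have hYgf : ∀ x y, x ∈ Y → y ∈ Y → g x y ∈ Y ∧ f y x ∈ Y := by
    intro x y hx hy
    have h2 := hY (x, y) (Set.mem_prod.mpr ⟨hx, hy⟩)
    rw [hS] at h2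
    exact Set.mem_prod.mp h2
  have hrel1 : ∀ x y : X, (x ∈ Y ∧ y ∈ Y) ↔ (g x y ∈ Y ∧ f y x ∈ Y) := by
    intro x y
    constructor
    · rintro ⟨hx, hy⟩; exact hYgf x y hx hy
    · rintro ⟨h1, h2⟩
      have h3 := hYgf _ _ h1 h2
      rw [inv1, inv2] at h3
      exact h3
  have hrel2 : ∀ x y : X, (x ∈ Y ∧ y ∈ Y) ↔ (f x y ∈ Y ∧ g y x ∈ Y) := by
    intro x y
    constructor
    · rintro ⟨hx, hy⟩
      exact ⟨(hYgf y x hy hx).2, (hYgf y x hy hx).1⟩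
    · rintro ⟨h1, h2⟩
      have h3 := hYgf _ _ h2 h1
      rw [inv1 y x, inv2 y x] at h3
      exact ⟨h3.2, h3.1⟩
  have hYg1 : ∀ x y, x ∈ Y → y ∈ Y → g x y ∈ Y := fun x y hx hy => (hYgf x y hx hy).1
  have hYg2 : ∀ x y, x ∈ Y → y ∈ Y → f x y ∈ Y := fun x y hx hy => (hYgf y x hy hx).2
  -- the finite enumeration of Y
  set T : Finset X := Finset.univ.filter (fun z => z ∈ Y) with hT
  have hTmem : ∀ z, z ∈ T ↔ z ∈ Y := by
    intro z
    simp [hT]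
  -- common right multiple of Y
  obtain ⟨w, hwp, hwl, hwd⟩ := YBA.exists_common_mul g f hg Y hYg1 T.toList
    (fun y hy => (hTmem y).mp (Finset.mem_toList.mp hy))
  have hdvdY : ∀ y ∈ Y, LDvd (PresentedMonoid.of (ybMonRel g f) y) δ :=
    fun y hy => hδ.1 _ ⟨y, hy, rfl⟩
  -- conjunct 1
  have hδΔ : LDvd δ Δ := hδ.2 Δ (by rintro a ⟨y, hy, rfl⟩; exact hΔr.1 _ ⟨y, rfl⟩)
  -- J-vector of δ
  have hδw : LDvd δ (PresentedMonoid.mk (ybMonRel g f) w) :=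
    hδ.2 _ (by
      rintro a ⟨y, hy, rfl⟩
      exact hwd y (Finset.mem_toList.mpr ((hTmem y).mpr hy)))
  obtain ⟨cδ, hcδ⟩ := hδw
  have hsumδ : ∑ z, YBA.JJ g f hg inv1 A2g δ z ≤ T.card := by
    have h1 := YBA.sum_JJ_mk g f hg inv1 A2g w
    rw [hcδ, YBA.sum_JJ_mul] at h1
    rw [hwl, Finset.length_toList] at h1
    omega
  have hJδ : ∀ z, YBA.JJ g f hg inv1 A2g δ z = if z ∈ T then 1 else 0 :=
    YBA.pinch1 T _ (fun y hy => YBA.pos_of_dvd g f hg inv1 A2g δ y (hdvdY y ((hTmem y).mp hy)))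
      hsumδ
  -- conjunct 3: support
  have hsupp : {x : X | LDvd (PresentedMonoid.of (ybMonRel g f) x) δ} = Y := by
    ext x
    simp only [Set.mem_setOf_eq]
    constructor
    · intro h
      have hp := YBA.pos_of_dvd g f hg inv1 A2g δ x h
      rw [hJδ x] at hp
      by_cases hx : x ∈ T
      · exact (hTmem x).mp hx
      · rw [if_neg hx] at hp
        exact absurd hp (lt_irrefl 0)
    · exact fun hy => hdvdY x hy
  -- J-vector of Δ
  have hΔdvdall : ∀ x : X, LDvd (PresentedMonoid.of (ybMonRel g f) x) Δ :=
    fun x => hΔr.1 _ ⟨x, rfl⟩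
  obtain ⟨w0, hw0p, hw0l, hw0d⟩ := YBA.exists_common_mul g f hg Set.univ
    (fun _ _ _ _ => Set.mem_univ _) (Finset.univ : Finset X).toList (fun y _ => Set.mem_univ y)
  have hΔw0 : LDvd Δ (PresentedMonoid.mk (ybMonRel g f) w0) :=
    hΔr.2 _ (by
      rintro a ⟨x, rfl⟩
      exact hw0d x (Finset.mem_toList.mpr (Finset.mem_univ x)))
  obtain ⟨cΔ, hcΔ⟩ := hΔw0
  have hsumΔ : ∑ z, YBA.JJ g f hg inv1 A2g Δ z ≤ (Finset.univ : Finset X).card := by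
    have h1 := YBA.sum_JJ_mk g f hg inv1 A2g w0
    rw [hcΔ, YBA.sum_JJ_mul] at h1
    rw [hw0l, Finset.length_toList] at h1
    omega
  have hJΔ : ∀ z, YBA.JJ g f hg inv1 A2g Δ z = 1 := by
    intro z
    have h := YBA.pinch1 Finset.univ _
      (fun y _ => YBA.pos_of_dvd g f hg inv1 A2g Δ y (hΔdvdall y)) hsumΔ z
    rwa [if_pos (Finset.mem_univ z)] at h
  -- pure representative of δ
  obtain ⟨u, v, hδu, hcv, hup, hvp⟩ := YBA.exists_pure_rep g f Y hrel1 hwp hcδ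
  have hsumδeq : ∑ z, YBA.JJ g f hg inv1 A2g δ z = T.card := by
    rw [Finset.sum_congr rfl (fun z _ => hJδ z)]
    simp
  have hulen : u.length = T.card := by
    have h1 := YBA.sum_JJ_mk g f hg inv1 A2g u
    rw [← hδu] at h1
    omega
  -- right divisibility data through balancedness of Δ
  have hbal' : ∀ a, LDvd a Δ → RDvd a Δ := by
    intro a h
    have h2 : a ∈ LDiv Δ := h
    rw [hΔbal] at h2
    exact h2
  have hδRΔ : RDvd δ Δ := hbal' δ hδΔ
  have hofRΔ : ∀ x : X, RDvd (PresentedMonoid.of (ybMonRel g f) x) Δ :=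
    fun x => hΔl.1 _ ⟨x, rfl⟩
  -- mirror world: J-vector of rv Δ is constantly 1
  have hJ2Δ : ∀ z, YBA.JJ f g hf A1f A2f (YBA.rv g f Δ) z = 1 := by
    have hsupp2 : ∀ y ∈ (Finset.univ : Finset X), 1 ≤ YBA.JJ f g hf A1f A2f (YBA.rv g f Δ) y := by
      intro y _
      apply YBA.pos_of_dvd f g hf A1f A2f _ y
      have h2 := (YBA.rdvd_iff_ldvd_rv g f _ Δ).mp (hofRΔ y)
      rwa [YBA.rv_of] at h2
    have hsum2 : ∑ z, YBA.JJ f g hf A1f A2f (YBA.rv g f Δ) z ≤ (Finset.univ : Finset X).card := by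
      obtain ⟨u0, hu0⟩ := PresentedMonoid.surjective_mk Δ
      have h1 := YBA.sum_JJ_mk g f hg inv1 A2g u0
      rw [hu0] at h1
      have hlen0 : u0.length = (Finset.univ : Finset X).card := by
        rw [← h1, Finset.sum_congr rfl (fun z _ => hJΔ z)]
        simp
      rw [← hu0, YBA.rv_mk, YBA.sum_JJ_mk, FreeMonoid.length_reverse, hlen0]
    intro z
    have h := YBA.pinch1 Finset.univ _ hsupp2 hsum2 z
    rwa [if_pos (Finset.mem_univ z)] at h
  -- J-vector of rv δ is the indicator of Y
  have hrδ : YBA.rv g f δ = PresentedMonoid.mk (ybMonRel f g) u.reverse := by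
    rw [hδu, YBA.rv_mk]
  have hJ2δle : ∀ z, YBA.JJ f g hf A1f A2f (YBA.rv g f δ) z ≤ 1 := by
    obtain ⟨c2, hc2⟩ := (YBA.rdvd_iff_ldvd_rv g f δ Δ).mp hδRΔ
    intro ζ
    have h1 := hJ2Δ ζ
    rw [hc2, YBA.JJ_mul_apply] at h1
    omega
  have hJ2δ0 : ∀ z, z ∉ Y → YBA.JJ f g hf A1f A2f (YBA.rv g f δ) z = 0 := by
    intro z hz
    rw [hrδ]
    exact YBA.JJ_eq_zero_of_pure f g hf A1f A2f Y hYg2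
      (fun a ha => hup a (List.mem_reverse.mp ha)) hz
  have hsumrδ : T.card ≤ ∑ z, YBA.JJ f g hf A1f A2f (YBA.rv g f δ) z := by
    have h : ∑ z, YBA.JJ f g hf A1f A2f (YBA.rv g f δ) z = T.card := by
      rw [hrδ, YBA.sum_JJ_mk, FreeMonoid.length_reverse, hulen]
    omega
  have hJ2δ : ∀ z, YBA.JJ f g hf A1f A2f (YBA.rv g f δ) z = if z ∈ T then 1 else 0 :=
    YBA.pinch2 T _ hJ2δle (fun z hz => hJ2δ0 z (fun hy => hz ((hTmem z).mpr hy))) hsumrδ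
  -- conjunct 2: balancedness
  have hbalδ : BalancedElem δ := by
    unfold BalancedElem LDiv RDiv
    ext a
    simp only [Set.mem_setOf_eq]
    constructor
    · rintro ⟨c, hc⟩
      obtain ⟨ua, uc, hau, hcu, hpa, hpc⟩ := YBA.exists_pure_rep g f Y hrel1 hup
        (by rw [← hδu]; exact hc)
      have hmul : YBA.rv g f δ = YBA.rv g f c * YBA.rv g f a := by
        rw [hc, YBA.rv_mul]
      have h01 : ∀ ζ, YBA.JJ f g hf A1f A2f (YBA.rv g f a) ζ ≤ 1 := by
        intro ζ
        have h1 := hJ2δ ((YBA.pp f g hf A1f A2f (YBA.rv g f c)) ζ)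
        rw [hmul, YBA.JJ_mul_apply, Equiv.symm_apply_apply] at h1
        split at h1 <;> omega
      have hsub : ∀ ζ, 0 < YBA.JJ f g hf A1f A2f (YBA.rv g f a) ζ →
          0 < YBA.JJ f g hf A1f A2f (YBA.rv g f δ) ζ := by
        intro ζ hpos
        by_cases hζ : ζ ∈ Y
        · rw [hJ2δ ζ, if_pos ((hTmem ζ).mpr hζ)]
          omega
        · exfalso
          rw [hau, YBA.rv_mk] at hpos
          have h0 : YBA.JJ f g hf A1f A2f
              ((PresentedMonoid.mk (ybMonRel f g)) ua.reverse) ζ = 0 :=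
            YBA.JJ_eq_zero_of_pure f g hf A1f A2f Y hYg2 (w := ua.reverse)
              (fun b hb => hpa b (List.mem_reverse.mp hb)) hζ
          rw [h0] at hpos
          exact lt_irrefl 0 hpos
      have hldvd := YBA.ldvd_of_le_one f g hf A1f A2f
        (∑ z, YBA.JJ f g hf A1f A2f (YBA.rv g f a) z) (YBA.rv g f a) (YBA.rv g f δ)
        rfl h01 hsub
      exact (YBA.rdvd_iff_ldvd_rv g f a δ).mpr hldvd
    · rintro ⟨c, hc⟩
      obtain ⟨uc, va, hcu, hav, hpc, hpa⟩ := YBA.exists_pure_rep g f Y hrel1 hup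
        (by rw [← hδu]; exact hc)
      have h01 : ∀ ζ, YBA.JJ g f hg inv1 A2g a ζ ≤ 1 := by
        intro ζ
        have h1 := hJδ ((YBA.pp g f hg inv1 A2g c) ζ)
        rw [hc, YBA.JJ_mul_apply, Equiv.symm_apply_apply] at h1
        split at h1 <;> omega
      have hsub : ∀ ζ, 0 < YBA.JJ g f hg inv1 A2g a ζ →
          0 < YBA.JJ g f hg inv1 A2g δ ζ := by
        intro ζ hpos
        by_cases hζ : ζ ∈ Y
        · rw [hJδ ζ, if_pos ((hTmem ζ).mpr hζ)]
          omega
        · exfalso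
          rw [hav] at hpos
          rw [YBA.JJ_eq_zero_of_pure g f hg inv1 A2g Y hYg1 hpa hζ] at hpos
          exact lt_irrefl 0 hpos
      exact YBA.ldvd_of_le_one g f hg inv1 A2g
        (∑ z, YBA.JJ g f hg inv1 A2g a z) a δ rfl h01 hsub
  exact ⟨hδΔ, hbalδ, hsupp⟩
end

section
/- Let (X,S) be a non-degenerate symmetric solution with X finite, Y ⊆ X invariant, δ the right lcm of Y in M(X,S), and Δ the Garside element. Then Div(δ) = Div(Δ) ∩ M_Y, where M_Y is the submonoid generated by Y. Consequently the subgroup G_Y of G(X,S) generated by Y is a standard parabolic subgroup. -/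
/-- A subgroup `H` of the group `G` is a standard parabolic subgroup (with respect to the
Garside element `Δ` of the monoid `M` and the canonical map `ι : M → G`) if it is
generated by the image of a standard parabolic submonoid `M_δ`, where `δ ∈ Div(Δ)` is
balanced, `M_δ` is generated by `Div(δ)`, and `M_δ ∩ Div(Δ) = Div(δ)`. -/
def IsStandardParabolicSubgroup {M G : Type*} [Monoid M] [Group G]
    (ι : M →* G) (Δ : M) (H : Subgroup G) : Prop :=
  ∃ δ : M, δ ∈ LDiv Δ ∧ BalancedElem δ ∧
    ((Submonoid.closure (LDiv δ) : Set M) ∩ LDiv Δ = LDiv δ) ∧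
    H = Subgroup.closure (ι '' (Submonoid.closure (LDiv δ) : Set M))

namespace YBAux

variable {X : Type*}

def YBM (X : Type*) := Multiset X × Equiv.Perm X

instance : Monoid (YBM X) where
  one := (0, 1)
  mul a b := (a.1 + b.1.map a.2, a.2 * b.2)
  mul_assoc a b c := by
    show (_, _) = (_, _)
    refine Prod.ext ?_ (mul_assoc _ _ _)
    show a.1 + b.1.map ⇑a.2 + c.1.map ⇑(a.2 * b.2) = a.1 + (b.1 + c.1.map ⇑b.2).map ⇑a.2
    rw [Multiset.map_add, Multiset.map_map, add_assoc]
    rfl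
  one_mul a := by
    show ((0 : Multiset X) + a.1.map ⇑(1 : Equiv.Perm X), 1 * a.2) = a
    simp
    rfl
  mul_one a := by
    show (a.1 + (0 : Multiset X).map _, a.2 * 1) = a
    simp
    rfl

theorem YBM.mul_def (a b : YBM X) : a * b = (a.1 + b.1.map a.2, a.2 * b.2) := rfl
theorem YBM.one_def : (1 : YBM X) = ((0 : Multiset X), (1 : Equiv.Perm X)) := rfl

variable (g f : X → X → X)

section Defs
variable (hgb : ∀ x, Function.Bijective (g x))

noncomputable def lamE (x : X) : X ≃ X := Equiv.ofBijective (g x) (hgb x)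

@[simp] theorem lamE_apply (x z : X) : lamE g hgb x z = g x z := rfl

def Jf : List X → List X
  | [] => []
  | x :: w => x :: (Jf w).map (g x)

noncomputable def Ji : List X → List X
  | [] => []
  | t :: l => t :: Ji (l.map (lamE g hgb t).symm)
  termination_by l => l.length
  decreasing_by simp

theorem Ji_nil : Ji g hgb [] = [] := by rw [Ji.eq_def]

theorem Ji_cons (t : X) (l : List X) :
    Ji g hgb (t :: l) = t :: Ji g hgb (l.map (lamE g hgb t).symm) := by rw [Ji.eq_def]

theorem Ji_Jf (w : List X) : Ji g hgb (Jf g w) = w := by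
  induction w with
  | nil => simp [Jf, Ji_nil]
  | cons x w ih =>
    rw [Jf, Ji_cons, List.map_map]
    have : (⇑(lamE g hgb x).symm ∘ g x) = id := by
      funext z; exact (lamE g hgb x).symm_apply_apply z
    rw [this, List.map_id, ih]

theorem Jf_Ji_aux : ∀ (n : ℕ) (l : List X), l.length ≤ n → Jf g (Ji g hgb l) = l := by
  intro n
  induction n with
  | zero => intro l h; rw [List.length_eq_zero_iff.mp (Nat.le_zero.mp h), Ji_nil]; rfl
  | succ n ih =>
    intro l h
    cases l with
    | nil => rw [Ji_nil]; rfl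
    | cons t l =>
      rw [Ji_cons, Jf, ih _ (by simpa using Nat.succ_le_succ_iff.mp h), List.map_map]
      have : (g t ∘ ⇑(lamE g hgb t).symm) = id := by
        funext z; exact (lamE g hgb t).apply_symm_apply z
      rw [this, List.map_id]

theorem Jf_Ji (l : List X) : Jf g (Ji g hgb l) = l := Jf_Ji_aux g hgb l.length l le_rfl

/-- The multiplicative invariant on the free monoid. -/
noncomputable def psigen (x : X) : YBM X := ({x}, lamE g hgb x)

noncomputable def Psi : FreeMonoid X →* YBM X :=
  FreeMonoid.lift (psigen g hgb)

theorem Psi_of (x : X) : Psi g hgb (FreeMonoid.of x) = ((({x} : Multiset X), lamE g hgb x) : YBM X) :=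
  rfl

theorem Psi_ofList_fst (l : List X) :
    (Psi g hgb (FreeMonoid.ofList l)).1 = (↑(Jf g l) : Multiset X) := by
  induction l with
  | nil => rfl
  | cons x l ih =>
    rw [FreeMonoid.ofList_cons, map_mul, YBM.mul_def]
    show ({x} : Multiset X) + _ = _
    rw [ih, Jf]
    rw [Multiset.map_coe, Multiset.singleton_add, Multiset.cons_coe]
    rfl

theorem psi_respects (inv1 : ∀ x y, g (g x y) (f y x) = x)
    (star : ∀ x y z, g x (g y z) = g (g x y) (g (f y x) z)) :
    ∀ a b : FreeMonoid X, ybMonRel g f a b →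
    FreeMonoid.lift (psigen g hgb) a = FreeMonoid.lift (psigen g hgb) b := by
  rintro a b ⟨x, y, rfl, rfl⟩
  rw [map_mul, map_mul, FreeMonoid.lift_eval_of, FreeMonoid.lift_eval_of,
    FreeMonoid.lift_eval_of, FreeMonoid.lift_eval_of]
  rw [YBM.mul_def, YBM.mul_def]
  refine Prod.ext ?_ ?_
  · show ({x} : Multiset X) + Multiset.map (g x) {y} =
      ({g x y} : Multiset X) + Multiset.map (g (g x y)) {f y x}
    rw [Multiset.map_singleton, Multiset.map_singleton, inv1, add_comm]
  · show lamE g hgb x * lamE g hgb y = lamE g hgb (g x y) * lamE g hgb (f y x)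
    ext z
    exact star x y z

/-- The invariant, descended to the presented monoid. -/
noncomputable def psiM (inv1 : ∀ x y, g (g x y) (f y x) = x)
    (star : ∀ x y z, g x (g y z) = g (g x y) (g (f y x) z)) :
    PresentedMonoid (ybMonRel g f) →* YBM X :=
  PresentedMonoid.lift (psigen g hgb) (psi_respects g f hgb inv1 star)

theorem psiM_mk (inv1 : ∀ x y, g (g x y) (f y x) = x)
    (star : ∀ x y z, g x (g y z) = g (g x y) (g (f y x) z)) (w : FreeMonoid X) :
    psiM g f hgb inv1 star (PresentedMonoid.mk _ w) = Psi g hgb w := rfl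


theorem mk_rel (a c : X) :
    PresentedMonoid.mk (ybMonRel g f) (.of a * .of c) =
      PresentedMonoid.mk _ (.of (g a c) * .of (f c a)) :=
  (Con.eq _).mpr (ConGen.Rel.of _ _ ⟨a, c, rfl, rfl⟩)

theorem mk_cons_cons (u v : X) (T : List X) :
    PresentedMonoid.mk (ybMonRel g f) (.ofList (u :: v :: T)) =
      PresentedMonoid.mk _ (.ofList (g u v :: f v u :: T)) := by
  have h := mk_rel g f u v
  rw [map_mul, map_mul] at h
  rw [FreeMonoid.ofList_cons, FreeMonoid.ofList_cons, FreeMonoid.ofList_cons,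
    FreeMonoid.ofList_cons, map_mul, map_mul, map_mul, map_mul, ← mul_assoc, ← mul_assoc, h]

theorem swap_helper (inv1 : ∀ x y, g (g x y) (f y x) = x)
    (star : ∀ x y z, g x (g y z) = g (g x y) (g (f y x) z)) (u v : X) (L : List X) :
    PresentedMonoid.mk (ybMonRel g f) (.ofList (Ji g hgb (u :: v :: L))) =
      PresentedMonoid.mk _ (.ofList (Ji g hgb (v :: u :: L))) := by
  have hgac : g u ((lamE g hgb u).symm v) = v := (lamE g hgb u).apply_symm_apply v
  have hgbc' : g v ((lamE g hgb v).symm u) = u := (lamE g hgb v).apply_symm_apply u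
  have hfc : f ((lamE g hgb u).symm v) u = (lamE g hgb v).symm u := by
    have h2 := inv1 u ((lamE g hgb u).symm v)
    rw [hgac] at h2
    exact (hgb v).1 (h2.trans hgbc'.symm)
  have htail2 : ⇑(lamE g hgb ((lamE g hgb u).symm v)).symm ∘ ⇑(lamE g hgb u).symm =
      ⇑(lamE g hgb ((lamE g hgb v).symm u)).symm ∘ ⇑(lamE g hgb v).symm := by
    have htail : (lamE g hgb ((lamE g hgb u).symm v)).trans (lamE g hgb u) =
        (lamE g hgb ((lamE g hgb v).symm u)).trans (lamE g hgb v) := by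
      ext z
      show g u (g ((lamE g hgb u).symm v) z) = g v (g ((lamE g hgb v).symm u) z)
      rw [star u ((lamE g hgb u).symm v) z, hgac, hfc]
    funext z
    have h3 := congrArg (fun E : X ≃ X => E.symm z) htail
    simpa only [Equiv.symm_trans_apply, Function.comp_apply] using h3
  rw [Ji_cons, List.map_cons, Ji_cons, List.map_map,
    Ji_cons (t := v), List.map_cons, Ji_cons, List.map_map, htail2]
  exact (mk_cons_cons g f u ((lamE g hgb u).symm v) _).trans (by rw [hgac, hfc])

theorem JiPerm (inv1 : ∀ x y, g (g x y) (f y x) = x)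
    (star : ∀ x y z, g x (g y z) = g (g x y) (g (f y x) z))
    {l l' : List X} (h : l.Perm l') :
    ∀ e : X ≃ X,
      PresentedMonoid.mk (ybMonRel g f) (.ofList (Ji g hgb (l.map e))) =
        PresentedMonoid.mk _ (.ofList (Ji g hgb (l'.map e))) := by
  induction h with
  | nil => intro e; rfl
  | cons x h ih =>
    intro e
    rw [List.map_cons, Ji_cons, List.map_cons, Ji_cons, List.map_map, List.map_map]
    have h1 : ⇑(lamE g hgb (e x)).symm ∘ ⇑e = ⇑(e.trans (lamE g hgb (e x)).symm) := rfl
    rw [h1, FreeMonoid.ofList_cons, FreeMonoid.ofList_cons, map_mul, map_mul,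
      ih (e.trans (lamE g hgb (e x)).symm)]
  | swap x y l =>
    intro e
    rw [List.map_cons, List.map_cons, List.map_cons, List.map_cons]
    exact swap_helper g f hgb inv1 star (e y) (e x) (l.map e)
  | trans _ _ ih1 ih2 => intro e; exact (ih1 e).trans (ih2 e)

section Char
variable (inv1 : ∀ x y, g (g x y) (f y x) = x)
  (star : ∀ x y z, g x (g y z) = g (g x y) (g (f y x) z))

omit hgb in
theorem junk_placeholder : True := trivial

include inv1 star

omit inv1 star in
theorem Psi_fst (w : FreeMonoid X) :
    (Psi g hgb w).1 = (↑(Jf g (FreeMonoid.toList w)) : Multiset X) := by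
  have := Psi_ofList_fst g hgb (FreeMonoid.toList w)
  rwa [FreeMonoid.ofList_toList] at this

theorem mk_eq_iff (u v : FreeMonoid X) :
    PresentedMonoid.mk (ybMonRel g f) u = PresentedMonoid.mk _ v ↔
      (Psi g hgb u).1 = (Psi g hgb v).1 := by
  constructor
  · intro h
    have := congrArg (psiM g f hgb inv1 star) h
    rw [psiM_mk, psiM_mk] at this
    rw [this]
  · intro h
    rw [Psi_fst, Psi_fst] at h
    have hperm : (Jf g (FreeMonoid.toList u)).Perm (Jf g (FreeMonoid.toList v)) :=
      Multiset.coe_eq_coe.mp h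
    have h2 := JiPerm g f hgb inv1 star hperm (Equiv.refl X)
    simp only [Equiv.coe_refl, List.map_id, Ji_Jf] at h2
    rwa [FreeMonoid.ofList_toList, FreeMonoid.ofList_toList] at h2

/-- The multiset invariant on the presented monoid. -/
noncomputable def mu (m : PresentedMonoid (ybMonRel g f)) : Multiset X :=
  (psiM g f hgb inv1 star m).1

/-- The permutation invariant on the presented monoid. -/
noncomputable def lamM (m : PresentedMonoid (ybMonRel g f)) : Equiv.Perm X :=
  (psiM g f hgb inv1 star m).2

theorem mu_inj {a b : PresentedMonoid (ybMonRel g f)}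
    (h : mu g f hgb inv1 star a = mu g f hgb inv1 star b) : a = b := by
  induction a with | _ u => ?_
  induction b with | _ v => ?_
  exact (mk_eq_iff g f hgb inv1 star u v).mpr h

theorem mu_of (x : X) : mu g f hgb inv1 star (PresentedMonoid.of _ x) = {x} := rfl

theorem mu_one : mu g f hgb inv1 star 1 = 0 := by
  show (psiM g f hgb inv1 star 1).1 = 0
  rw [map_one]
  rfl

theorem mu_mul (a b : PresentedMonoid (ybMonRel g f)) :
    mu g f hgb inv1 star (a * b) =
      mu g f hgb inv1 star a + (mu g f hgb inv1 star b).map (lamM g f hgb inv1 star a) := by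
  show (psiM g f hgb inv1 star (a * b)).1 = _
  rw [map_mul]
  rfl

theorem lamM_mul (a b : PresentedMonoid (ybMonRel g f)) :
    lamM g f hgb inv1 star (a * b) = lamM g f hgb inv1 star a * lamM g f hgb inv1 star b := by
  show (psiM g f hgb inv1 star (a * b)).2 = _
  rw [map_mul]
  rfl

theorem lamM_of (x : X) :
    lamM g f hgb inv1 star (PresentedMonoid.of _ x) = lamE g hgb x := rfl

theorem lamM_one : lamM g f hgb inv1 star 1 = 1 := by
  show (psiM g f hgb inv1 star 1).2 = 1
  rw [map_one]
  rfl

/-- A canonical word with a given multiset invariant. -/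
noncomputable def wordOf (s : Multiset X) : FreeMonoid X := .ofList (Ji g hgb s.toList)

theorem mu_wordOf (s : Multiset X) :
    mu g f hgb inv1 star (PresentedMonoid.mk _ (wordOf g hgb s)) = s := by
  show (Psi g hgb (wordOf g hgb s)).1 = s
  rw [wordOf, Psi_ofList_fst, Jf_Ji, Multiset.coe_toList]

theorem ldvd_iff_s12 (a b : PresentedMonoid (ybMonRel g f)) :
    LDvd a b ↔ mu g f hgb inv1 star a ≤ mu g f hgb inv1 star b := by
  constructor
  · rintro ⟨c, rfl⟩
    rw [mu_mul]
    exact Multiset.le_add_right _ _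
  · intro h
    classical
    refine ⟨PresentedMonoid.mk _ (wordOf g hgb
      ((mu g f hgb inv1 star b - mu g f hgb inv1 star a).map
        ⇑(lamM g f hgb inv1 star a).symm)), ?_⟩
    apply mu_inj g f hgb inv1 star
    rw [mu_mul, mu_wordOf, Multiset.map_map]
    have : ⇑(lamM g f hgb inv1 star a) ∘ ⇑(lamM g f hgb inv1 star a).symm = id :=
      funext fun z => (lamM g f hgb inv1 star a).apply_symm_apply z
    rw [this, Multiset.map_id, add_tsub_cancel_of_le h]

end Char

section Main
variable [Fintype X] [DecidableEq X]
variable (inv1 : ∀ x y, g (g x y) (f y x) = x)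
  (star : ∀ x y z, g x (g y z) = g (g x y) (g (f y x) z))
variable (Y : Set X) [DecidablePred (· ∈ Y)]

/-- The multiset of elements of `Y`, each with multiplicity one. -/
def YMS : Multiset X := (Finset.univ.filter (· ∈ Y)).val

omit inv1 star hgb in
theorem count_YMS (x : X) : (YMS Y).count x = if x ∈ Y then 1 else 0 := by
  rw [YMS, Finset.filter_val, Multiset.count_filter]
  simp [Multiset.count_univ]

omit inv1 star hgb in
theorem YMS_le_univ : YMS Y ≤ Finset.univ.val := by
  rw [YMS, Finset.filter_val]
  exact Multiset.filter_le _ _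

omit inv1 star hgb in
theorem mem_YMS {x : X} : x ∈ YMS Y ↔ x ∈ Y := by
  rw [← Multiset.one_le_count_iff_mem, count_YMS]
  split <;> simp_all

omit inv1 star hgb in
theorem le_YMS_iff {s : Multiset X} :
    s ≤ YMS Y ↔ s ≤ Finset.univ.val ∧ ∀ x ∈ s, x ∈ Y := by
  constructor
  · intro h
    exact ⟨h.trans (YMS_le_univ Y), fun x hx => (mem_YMS Y).mp (Multiset.mem_of_le h hx)⟩
  · rintro ⟨h1, h2⟩
    rw [Multiset.le_iff_count]
    intro x
    rw [count_YMS]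
    by_cases hx : x ∈ Y
    · rw [if_pos hx]
      calc Multiset.count x s ≤ Multiset.count x Finset.univ.val :=
            Multiset.le_iff_count.mp h1 x
        _ = 1 := Multiset.count_univ x
    · rw [if_neg hx, Nat.le_zero, Multiset.count_eq_zero]
      exact fun hmem => hx (h2 x hmem)

omit inv1 star hgb in
theorem equiv_symm_mem (e : X ≃ X) (h : ∀ z ∈ Y, e z ∈ Y) {z : X} (hz : z ∈ Y) :
    e.symm z ∈ Y := by
  let F : Y → Y := fun w => ⟨e w, h w w.2⟩
  have Finj : Function.Injective F := fun w1 w2 hw =>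
    Subtype.ext (e.injective (congrArg Subtype.val hw))
  obtain ⟨w, hw⟩ := Finite.injective_iff_surjective.mp Finj ⟨z, hz⟩
  have h1 : e ↑w = z := congrArg Subtype.val hw
  have h2 : e.symm z = ↑w := by rw [← h1]; exact e.symm_apply_apply w
  rw [h2]; exact w.2

variable (hYg : ∀ ⦃y⦄, y ∈ Y → ∀ ⦃z⦄, z ∈ Y → g y z ∈ Y)

include hYg

omit inv1 star in
theorem lamE_symm_mem {t : X} (ht : t ∈ Y) {z : X} (hz : z ∈ Y) :
    (lamE g hgb t).symm z ∈ Y := by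
  let F : Y → Y := fun w => ⟨g t w, hYg ht w.2⟩
  have Finj : Function.Injective F := fun w1 w2 h =>
    Subtype.ext ((hgb t).1 (congrArg Subtype.val h))
  obtain ⟨w, hw⟩ := Finite.injective_iff_surjective.mp Finj ⟨z, hz⟩
  have h1 : g t ↑w = z := congrArg Subtype.val hw
  have h2 : (lamE g hgb t).symm z = ↑w := by
    rw [← h1]; exact (lamE g hgb t).symm_apply_apply w
  rw [h2]; exact w.2

omit inv1 star in
theorem Ji_mem_aux : ∀ (n : ℕ) (l : List X), l.length ≤ n → (∀ t ∈ l, t ∈ Y) →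
    ∀ x ∈ Ji g hgb l, x ∈ Y := by
  intro n
  induction n with
  | zero =>
    intro l h _ x hx
    rw [List.length_eq_zero_iff.mp (Nat.le_zero.mp h), Ji_nil] at hx
    exact absurd hx List.not_mem_nil
  | succ n ih =>
    intro l h hl x hx
    cases l with
    | nil => rw [Ji_nil] at hx; exact absurd hx List.not_mem_nil
    | cons t l =>
      rw [Ji_cons] at hx
      rcases List.mem_cons.mp hx with rfl | hx
      · exact hl x List.mem_cons_self
      · refine ih _ (by simpa using Nat.succ_le_succ_iff.mp h) ?_ x hx
        intro t' ht'
        obtain ⟨u, hu, rfl⟩ := List.mem_map.mp ht'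
        exact lamE_symm_mem g hgb Y hYg (hl t List.mem_cons_self) (hl u (List.mem_cons.mpr (Or.inr hu)))

omit inv1 star in
theorem Ji_mem {l : List X} (hl : ∀ t ∈ l, t ∈ Y) : ∀ x ∈ Ji g hgb l, x ∈ Y :=
  Ji_mem_aux g hgb Y hYg l.length l le_rfl hl

theorem MY_prop {m : PresentedMonoid (ybMonRel g f)}
    (hm : m ∈ Submonoid.closure (PresentedMonoid.of (ybMonRel g f) '' Y)) :
    (∀ x ∈ mu g f hgb inv1 star m, x ∈ Y) ∧
      ∀ z ∈ Y, lamM g f hgb inv1 star m z ∈ Y := by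
  induction hm using Submonoid.closure_induction with
  | mem a ha =>
    obtain ⟨y, hy, rfl⟩ := ha
    constructor
    · intro x hx
      rw [mu_of] at hx
      rw [Multiset.mem_singleton.mp hx]
      exact hy
    · intro z hz
      rw [lamM_of]
      exact hYg hy hz
  | one =>
    constructor
    · intro x hx
      rw [mu_one] at hx
      exact absurd hx (Multiset.notMem_zero x)
    · intro z hz
      rw [lamM_one]
      exact hz
  | mul a b ha hb iha ihb =>
    constructor
    · intro x hx
      rw [mu_mul] at hx
      rcases Multiset.mem_add.mp hx with hx | hx
      · exact iha.1 x hx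
      · obtain ⟨u, hu, rfl⟩ := Multiset.mem_map.mp hx
        exact iha.2 _ (ihb.1 u hu)
    · intro z hz
      rw [lamM_mul]
      exact iha.2 _ (ihb.2 z hz)

omit hYg in
theorem mk_ofList_mem {w : List X} (hw : ∀ x ∈ w, x ∈ Y) :
    PresentedMonoid.mk (ybMonRel g f) (.ofList w) ∈
      Submonoid.closure (PresentedMonoid.of (ybMonRel g f) '' Y) := by
  induction w with
  | nil =>
    have : FreeMonoid.ofList ([] : List X) = 1 := rfl
    rw [this, map_one]
    exact one_mem _
  | cons x w ih =>
    rw [FreeMonoid.ofList_cons, map_mul]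
    refine mul_mem (Submonoid.subset_closure ⟨x, hw x List.mem_cons_self, rfl⟩)
      (ih fun t ht => hw t (List.mem_cons.mpr (Or.inr ht)))

theorem mem_MY_of_mu {m : PresentedMonoid (ybMonRel g f)}
    (hm : ∀ x ∈ mu g f hgb inv1 star m, x ∈ Y) :
    m ∈ Submonoid.closure (PresentedMonoid.of (ybMonRel g f) '' Y) := by
  have hrep : m = PresentedMonoid.mk _ (wordOf g hgb (mu g f hgb inv1 star m)) :=
    mu_inj g f hgb inv1 star (mu_wordOf g f hgb inv1 star _).symm
  rw [hrep]
  refine mk_ofList_mem g f Y ?_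
  refine Ji_mem g hgb Y hYg ?_
  intro t ht
  exact hm t (by rwa [← Multiset.mem_toList])

end Main

section Lcm
variable [Fintype X] [DecidableEq X]
variable (inv1 : ∀ x y, g (g x y) (f y x) = x)
  (star : ∀ x y z, g x (g y z) = g (g x y) (g (f y x) z))
variable (Y : Set X) [DecidablePred (· ∈ Y)]

include inv1 star in
theorem mu_rightLcm_range {Δ : PresentedMonoid (ybMonRel g f)}
    (hΔr : IsRightLcmOfSet (Set.range (PresentedMonoid.of (ybMonRel g f))) Δ) :
    mu g f hgb inv1 star Δ = Finset.univ.val := by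
  apply le_antisymm
  · have hm : ∀ a ∈ Set.range (PresentedMonoid.of (ybMonRel g f)),
        LDvd a (PresentedMonoid.mk _ (wordOf g hgb (Finset.univ.val : Multiset X))) := by
      rintro a ⟨x, rfl⟩
      refine (ldvd_iff_s12 g f hgb inv1 star _ _).mpr ?_
      rw [mu_of, mu_wordOf, Multiset.singleton_le]
      exact Finset.mem_univ x
    have h2 := (ldvd_iff_s12 g f hgb inv1 star _ _).mp (hΔr.2 _ hm)
    rwa [mu_wordOf] at h2
  · rw [Multiset.le_iff_count]
    intro x
    rw [Multiset.count_univ]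
    have h1 := (ldvd_iff_s12 g f hgb inv1 star _ _).mp (hΔr.1 _ ⟨x, rfl⟩)
    rw [mu_of] at h1
    exact Multiset.one_le_count_iff_mem.mpr (Multiset.singleton_le.mp h1)

include inv1 star in
theorem mu_rightLcm_Y {δ : PresentedMonoid (ybMonRel g f)}
    (hδ : IsRightLcmOfSet (PresentedMonoid.of (ybMonRel g f) '' Y) δ) :
    mu g f hgb inv1 star δ = YMS Y := by
  apply le_antisymm
  · have hm : ∀ a ∈ PresentedMonoid.of (ybMonRel g f) '' Y,
        LDvd a (PresentedMonoid.mk _ (wordOf g hgb (YMS Y))) := by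
      rintro a ⟨y, hy, rfl⟩
      refine (ldvd_iff_s12 g f hgb inv1 star _ _).mpr ?_
      rw [mu_of, mu_wordOf, Multiset.singleton_le]
      exact (mem_YMS Y).mpr hy
    have h2 := (ldvd_iff_s12 g f hgb inv1 star _ _).mp (hδ.2 _ hm)
    rwa [mu_wordOf] at h2
  · rw [Multiset.le_iff_count]
    intro x
    rw [count_YMS]
    by_cases hx : x ∈ Y
    · rw [if_pos hx]
      have h1 := (ldvd_iff_s12 g f hgb inv1 star _ _).mp (hδ.1 _ ⟨x, hx, rfl⟩)
      rw [mu_of] at h1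
      exact Multiset.one_le_count_iff_mem.mpr (Multiset.singleton_le.mp h1)
    · rw [if_neg hx]
      exact Nat.zero_le _

omit [Fintype X] [DecidableEq X] in
include inv1 in
theorem fz_of_T {x z : X} (hz : (lamE g hgb x).symm x = z) : f z x = z := by
  have hx : g x z = x := by rw [← hz]; exact (lamE g hgb x).apply_symm_apply x
  have h2 := inv1 x z
  rw [hx] at h2
  exact (hgb x).1 (h2.trans hx.symm)

omit [Fintype X] [DecidableEq X] in
include inv1 in
theorem T_inj (hfb : ∀ x, Function.Bijective (f x)) :
    Function.Injective (fun x => (lamE g hgb x).symm x) := by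
  intro x1 x2 h12
  simp only at h12
  have h1 : f ((lamE g hgb x2).symm x2) x1 = (lamE g hgb x2).symm x2 :=
    fz_of_T g f hgb inv1 h12
  have h2 : f ((lamE g hgb x2).symm x2) x2 = (lamE g hgb x2).symm x2 :=
    fz_of_T g f hgb inv1 rfl
  exact (hfb _).1 (h1.trans h2.symm)

variable (hYg : ∀ ⦃y⦄, y ∈ Y → ∀ ⦃z⦄, z ∈ Y → g y z ∈ Y)

include hYg inv1 in
theorem T_surjY (hfb : ∀ x, Function.Bijective (f x)) {y : X} (hy : y ∈ Y) :
    ∃ x ∈ Y, (lamE g hgb x).symm x = y := by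
  let F : Y → Y := fun w => ⟨(lamE g hgb w).symm w, lamE_symm_mem g hgb Y hYg w.2 w.2⟩
  have Finj : Function.Injective F := fun w1 w2 h =>
    Subtype.ext (T_inj g f hgb inv1 hfb (congrArg Subtype.val h))
  obtain ⟨w, hw⟩ := Finite.injective_iff_surjective.mp Finj ⟨y, hy⟩
  exact ⟨↑w, w.2, congrArg Subtype.val hw⟩

include hYg star in
theorem exists_compl (hfb : ∀ x, Function.Bijective (f x)) :
    ∀ (n : ℕ) (a : PresentedMonoid (ybMonRel g f)),
      mu g f hgb inv1 star a ≤ YMS Y →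
      Multiset.card (mu g f hgb inv1 star a) + n = Multiset.card (YMS Y) →
      ∃ c, mu g f hgb inv1 star (c * a) = YMS Y := by
  intro n
  induction n with
  | zero =>
    intro a h hcard
    refine ⟨1, ?_⟩
    rw [one_mul]
    exact Multiset.eq_of_le_of_card_le h (by omega)
  | succ n ih =>
    intro a h hcard
    have hne : ∃ y, y ∈ Y ∧ y ∉ mu g f hgb inv1 star a := by
      by_contra hno
      push_neg at hno
      have hle : YMS Y ≤ mu g f hgb inv1 star a := by
        rw [Multiset.le_iff_count]
        intro x
        rw [count_YMS]
        by_cases hx : x ∈ Y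
        · rw [if_pos hx]
          exact Multiset.one_le_count_iff_mem.mpr (hno x hx)
        · rw [if_neg hx]; exact Nat.zero_le _
      have := Multiset.card_le_card hle
      omega
    obtain ⟨y, hy, hynot⟩ := hne
    obtain ⟨x, hx, hxy⟩ := T_surjY g f hgb inv1 Y hYg hfb hy
    have hmua' : mu g f hgb inv1 star (PresentedMonoid.of _ x * a) =
        {x} + (mu g f hgb inv1 star a).map ⇑(lamE g hgb x) := by
      rw [mu_mul, mu_of, lamM_of]
    have hcnt : ∀ z : X, Multiset.count z ((mu g f hgb inv1 star a).map ⇑(lamE g hgb x)) =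
        Multiset.count ((lamE g hgb x).symm z) (mu g f hgb inv1 star a) := by
      intro z
      conv_lhs => rw [← (lamE g hgb x).apply_symm_apply z]
      exact Multiset.count_map_eq_count' _ _ (lamE g hgb x).injective _
    have hlea' : mu g f hgb inv1 star (PresentedMonoid.of _ x * a) ≤ YMS Y := by
      rw [hmua', Multiset.le_iff_count]
      intro z
      rw [Multiset.count_add, hcnt z, count_YMS]
      by_cases hzx : z = x
      · subst hzx
        rw [hxy, Multiset.count_eq_zero.mpr hynot, if_pos hx,
          Multiset.count_singleton, if_pos rfl]
      · rw [Multiset.count_singleton, if_neg hzx]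
        by_cases hzY : z ∈ Y
        · rw [if_pos hzY]
          calc 0 + Multiset.count ((lamE g hgb x).symm z) (mu g f hgb inv1 star a)
              ≤ Multiset.count ((lamE g hgb x).symm z) (YMS Y) := by
                rw [Nat.zero_add]; exact Multiset.le_iff_count.mp h _
            _ ≤ 1 := by rw [count_YMS]; split <;> omega
        · rw [if_neg hzY, Nat.zero_add, Nat.le_zero, Multiset.count_eq_zero]
          intro hmem
          have h1 : (lamE g hgb x).symm z ∈ Y :=
            (mem_YMS Y).mp (Multiset.mem_of_le h hmem)
          have h2 : g x ((lamE g hgb x).symm z) ∈ Y := hYg hx h1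
          have h3 : g x ((lamE g hgb x).symm z) = z := (lamE g hgb x).apply_symm_apply z
          rw [h3] at h2
          exact hzY h2
    have hcard' : Multiset.card (mu g f hgb inv1 star (PresentedMonoid.of _ x * a)) + n =
        Multiset.card (YMS Y) := by
      rw [hmua']
      simp only [Multiset.card_add, Multiset.card_singleton, Multiset.card_map]
      omega
    obtain ⟨c', hc'⟩ := ih _ hlea' hcard'
    exact ⟨c' * PresentedMonoid.of _ x, by rwa [mul_assoc]⟩

end Lcm

end Defs
end YBAux


/-- for a finite non-degenerate symmetric solution `(X,S)` with invariant
subset `Y`, and `δ` the right lcm of `Y` in the structure monoid, one has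
`Div(δ) = Div(Δ) ∩ M_Y`; consequently the subgroup of the structure group generated by
`Y` is a standard parabolic subgroup. -/
theorem invariant_gives_standard_parabolic {X : Type*} [Fintype X]
    (S : X × X → X × X) (g f : X → X → X)
    (hS : ∀ x y, S (x, y) = (g x y, f y x))
    (hbij : Function.Bijective S)
    (hinv : S ∘ S = id)
    (hbraid : map12 S ∘ map23 S ∘ map12 S = map23 S ∘ map12 S ∘ map23 S)
    (hg : ∀ x, Function.Bijective (g x)) (hf : ∀ x, Function.Bijective (f x))
    (Δ : PresentedMonoid (ybMonRel g f))
    (hΔbal : BalancedElem Δ)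
    (hΔr : IsRightLcmOfSet (Set.range (PresentedMonoid.of (ybMonRel g f))) Δ)
    (hΔl : IsLeftLcmOfSet (Set.range (PresentedMonoid.of (ybMonRel g f))) Δ)
    (ι : PresentedMonoid (ybMonRel g f) →* PresentedGroup (structureRels g f))
    (hι : ∀ x : X, ι (PresentedMonoid.of (ybMonRel g f) x) = PresentedGroup.of x)
    (Y : Set X) (hY : ∀ p : X × X, p ∈ Y ×ˢ Y → S p ∈ Y ×ˢ Y)
    (δ : PresentedMonoid (ybMonRel g f))
    (hδ : IsRightLcmOfSet (PresentedMonoid.of (ybMonRel g f) '' Y) δ) :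
    LDiv δ = LDiv Δ ∩
        (Submonoid.closure (PresentedMonoid.of (ybMonRel g f) '' Y) : Set _) ∧
      IsStandardParabolicSubgroup ι Δ
        (Subgroup.closure
          ((fun x => (PresentedGroup.of x : PresentedGroup (structureRels g f))) '' Y)) := by
  classical
  -- pointwise identities from involutivity and the braid relation
  have inv1 : ∀ x y, g (g x y) (f y x) = x := by
    intro x y
    have h := congrFun hinv (x, y)
    rw [Function.comp_apply, hS, hS, id_eq] at h
    exact (Prod.ext_iff.mp h).1
  have star : ∀ x y z, g x (g y z) = g (g x y) (g (f y x) z) := by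
    intro x y z
    have h := congrFun hbraid (x, y, z)
    simp only [Function.comp_apply, map12, map23, hS] at h
    exact ((Prod.ext_iff.mp h).1).symm
  have hYg : ∀ ⦃y⦄, y ∈ Y → ∀ ⦃z⦄, z ∈ Y → g y z ∈ Y := by
    intro y hy z hz
    have h := hY (y, z) (Set.mem_prod.mpr ⟨hy, hz⟩)
    rw [hS] at h
    exact (Set.mem_prod.mp h).1
  have hmuδ : YBAux.mu g f hg inv1 star δ = YBAux.YMS Y :=
    YBAux.mu_rightLcm_Y g f hg inv1 star Y hδ
  have hmuΔ : YBAux.mu g f hg inv1 star Δ = Finset.univ.val :=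
    YBAux.mu_rightLcm_range g f hg inv1 star hΔr
  -- membership characterizations
  have hLδ : ∀ a, a ∈ LDiv δ ↔ YBAux.mu g f hg inv1 star a ≤ YBAux.YMS Y := by
    intro a
    rw [← hmuδ]
    exact YBAux.ldvd_iff_s12 g f hg inv1 star a δ
  have hLΔ : ∀ a, a ∈ LDiv Δ ↔ YBAux.mu g f hg inv1 star a ≤ Finset.univ.val := by
    intro a
    rw [← hmuΔ]
    exact YBAux.ldvd_iff_s12 g f hg inv1 star a Δ
  have hMY : ∀ a, a ∈ Submonoid.closure (PresentedMonoid.of (ybMonRel g f) '' Y) ↔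
      ∀ x ∈ YBAux.mu g f hg inv1 star a, x ∈ Y := by
    intro a
    constructor
    · intro h
      exact (YBAux.MY_prop g f hg inv1 star Y hYg h).1
    · exact YBAux.mem_MY_of_mu g f hg inv1 star Y hYg
  -- the first statement
  have hmain : LDiv δ = LDiv Δ ∩
      (Submonoid.closure (PresentedMonoid.of (ybMonRel g f) '' Y) : Set _) := by
    ext a
    rw [Set.mem_inter_iff, SetLike.mem_coe, hLδ a, hLΔ a, hMY a]
    exact YBAux.le_YMS_iff Y
  have hδΔ : δ ∈ LDiv Δ := by
    rw [hLΔ δ, hmuδ]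
    exact YBAux.YMS_le_univ Y
  -- balancedness of δ
  have hbal : BalancedElem δ := by
    ext a
    constructor
    · intro ha
      have h := (hLδ a).mp ha
      have hcard := Multiset.card_le_card h
      obtain ⟨c, hc⟩ := YBAux.exists_compl g f hg inv1 star Y hYg hf
        (Multiset.card (YBAux.YMS Y) - Multiset.card (YBAux.mu g f hg inv1 star a)) a h
        (by omega)
      exact ⟨c, (YBAux.mu_inj g f hg inv1 star (hc.trans hmuδ.symm)).symm⟩
    · rintro ⟨c, hc⟩
      rw [hLδ a]
      have hsum : YBAux.YMS Y = YBAux.mu g f hg inv1 star c +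
          (YBAux.mu g f hg inv1 star a).map ⇑(YBAux.lamM g f hg inv1 star c) := by
        rw [← hmuδ, hc, YBAux.mu_mul]
      have hcY : YBAux.mu g f hg inv1 star c ≤ YBAux.YMS Y := by
        rw [hsum]; exact Multiset.le_add_right _ _
      have hcmem : c ∈ Submonoid.closure (PresentedMonoid.of (ybMonRel g f) '' Y) := by
        rw [hMY c]
        intro x hx
        exact (YBAux.mem_YMS Y).mp (Multiset.mem_of_le hcY hx)
      have hmaps : ∀ z ∈ Y, YBAux.lamM g f hg inv1 star c z ∈ Y :=
        (YBAux.MY_prop g f hg inv1 star Y hYg hcmem).2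
      have hsymm : ∀ z ∈ Y, (YBAux.lamM g f hg inv1 star c).symm z ∈ Y := by
        intro z hz
        exact YBAux.equiv_symm_mem Y _ hmaps hz
      have hmle : (YBAux.mu g f hg inv1 star a).map ⇑(YBAux.lamM g f hg inv1 star c) ≤
          YBAux.YMS Y := by
        rw [hsum]; exact Multiset.le_add_left _ _
      rw [Multiset.le_iff_count]
      intro z
      by_cases hzY : z ∈ Y
      · have h1 : Multiset.count z (YBAux.mu g f hg inv1 star a) =
            Multiset.count ((YBAux.lamM g f hg inv1 star c) z)
              ((YBAux.mu g f hg inv1 star a).map ⇑(YBAux.lamM g f hg inv1 star c)) :=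
          (Multiset.count_map_eq_count' _ _ (YBAux.lamM g f hg inv1 star c).injective _).symm
        rw [h1]
        calc Multiset.count _ _ ≤ Multiset.count ((YBAux.lamM g f hg inv1 star c) z)
              (YBAux.YMS Y) := Multiset.le_iff_count.mp hmle _
          _ ≤ 1 := by rw [YBAux.count_YMS]; split <;> omega
          _ ≤ Multiset.count z (YBAux.YMS Y) := by
              rw [YBAux.count_YMS, if_pos hzY]
      · rw [Multiset.count_eq_zero.mpr]
        · exact Nat.zero_le _
        · intro hmem
          have h2 : (YBAux.lamM g f hg inv1 star c) z ∈ YBAux.YMS Y :=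
            Multiset.mem_of_le hmle (Multiset.mem_map_of_mem _ hmem)
          have h3 := hsymm _ ((YBAux.mem_YMS Y).mp h2)
          rw [Equiv.symm_apply_apply] at h3
          exact hzY h3
  refine ⟨hmain, δ, hδΔ, hbal, ?_, ?_⟩
  · -- M_δ ∩ Div(Δ) = Div(δ)
    have hsub1 : Submonoid.closure (LDiv δ) ≤
        Submonoid.closure (PresentedMonoid.of (ybMonRel g f) '' Y) := by
      refine Submonoid.closure_le.mpr ?_
      intro a ha
      rw [SetLike.mem_coe, hMY a]
      intro x hx
      exact (YBAux.mem_YMS Y).mp (Multiset.mem_of_le ((hLδ a).mp ha) hx)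
    ext a
    constructor
    · rintro ⟨h1, h2⟩
      rw [hLδ a]
      rw [YBAux.le_YMS_iff Y]
      refine ⟨(hLΔ a).mp h2, ?_⟩
      have := hsub1 (SetLike.mem_coe.mp h1)
      exact (hMY a).mp this
    · intro ha
      refine ⟨SetLike.mem_coe.mpr (Submonoid.subset_closure ha), ?_⟩
      rw [hLΔ a]
      exact ((hLδ a).mp ha).trans (YBAux.YMS_le_univ Y)
  · -- the subgroup equality
    have key : ∀ m, m ∈ Submonoid.closure (PresentedMonoid.of (ybMonRel g f) '' Y) →
        ι m ∈ Subgroup.closure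
          ((fun x => (PresentedGroup.of x : PresentedGroup (structureRels g f))) '' Y) := by
      intro m hm
      induction hm using Submonoid.closure_induction with
      | mem a ha =>
        obtain ⟨y, hy, rfl⟩ := ha
        rw [hι y]
        exact Subgroup.subset_closure ⟨y, hy, rfl⟩
      | one => rw [map_one]; exact one_mem _
      | mul a b _ _ iha ihb => rw [map_mul]; exact mul_mem iha ihb
    have hsub1 : Submonoid.closure (LDiv δ) ≤
        Submonoid.closure (PresentedMonoid.of (ybMonRel g f) '' Y) := by
      refine Submonoid.closure_le.mpr ?_
      intro a ha
      rw [SetLike.mem_coe, hMY a]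
      intro x hx
      exact (YBAux.mem_YMS Y).mp (Multiset.mem_of_le ((hLδ a).mp ha) hx)
    apply le_antisymm
    · refine Subgroup.closure_le _ |>.mpr ?_
      rintro p ⟨y, hy, rfl⟩
      refine Subgroup.subset_closure ⟨PresentedMonoid.of (ybMonRel g f) y, ?_, (hι y)⟩
      refine SetLike.mem_coe.mpr (Submonoid.subset_closure ?_)
      rw [hLδ _]
      have : YBAux.mu g f hg inv1 star (PresentedMonoid.of (ybMonRel g f) y) = {y} :=
        YBAux.mu_of g f hg inv1 star y
      rw [this, Multiset.singleton_le]
      exact (YBAux.mem_YMS Y).mpr hy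
    · refine Subgroup.closure_le _ |>.mpr ?_
      rintro p ⟨m, hm, rfl⟩
      exact key m (hsub1 (SetLike.mem_coe.mp hm))
end

section
/- Let (X,S) be a non-degenerate symmetric solution with X finite, and let δ ∈ Div(Δ) be balanced such that the subgroup generated by Div(δ) is a standard parabolic subgroup of G(X,S). Then Supp(δ) = X ∩ Div(δ) is an invariant subset of (X,S): S(Supp(δ) × Supp(δ)) ⊆ Supp(δ) × Supp(δ). -/
/-- for a finite non-degenerate symmetric solution `(X,S)`, if `δ ∈ Div(Δ)`
is balanced and generates a standard parabolic subgroup (`M_δ ∩ Div(Δ) = Div(δ)`, with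
`M_δ` closed under left and right divisibility), then `Supp(δ) = X ∩ Div(δ)` is an
invariant subset of `(X,S)`. -/
theorem support_of_parabolic_invariant {X : Type*} [Fintype X]
    (S : X × X → X × X) (g f : X → X → X)
    (hS : ∀ x y, S (x, y) = (g x y, f y x))
    (hbij : Function.Bijective S)
    (hinv : S ∘ S = id)
    (hbraid : map12 S ∘ map23 S ∘ map12 S = map23 S ∘ map12 S ∘ map23 S)
    (hg : ∀ x, Function.Bijective (g x)) (hf : ∀ x, Function.Bijective (f x))
    (Δ : PresentedMonoid (ybMonRel g f))
    (hΔbal : BalancedElem Δ)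
    (hΔr : IsRightLcmOfSet (Set.range (PresentedMonoid.of (ybMonRel g f))) Δ)
    (hΔl : IsLeftLcmOfSet (Set.range (PresentedMonoid.of (ybMonRel g f))) Δ)
    (δ : PresentedMonoid (ybMonRel g f))
    (hδΔ : δ ∈ LDiv Δ) (hδbal : BalancedElem δ)
    (hpar : (Submonoid.closure (LDiv δ) : Set _) ∩ LDiv Δ = LDiv δ)
    (hclosed : ∀ u v : PresentedMonoid (ybMonRel g f),
      u * v ∈ Submonoid.closure (LDiv δ) →
        u ∈ Submonoid.closure (LDiv δ) ∧ v ∈ Submonoid.closure (LDiv δ)) :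
    ∀ p : X × X,
      p ∈ {x : X | LDvd (PresentedMonoid.of (ybMonRel g f) x) δ} ×ˢ
        {x : X | LDvd (PresentedMonoid.of (ybMonRel g f) x) δ} →
      S p ∈ {x : X | LDvd (PresentedMonoid.of (ybMonRel g f) x) δ} ×ˢ
        {x : X | LDvd (PresentedMonoid.of (ybMonRel g f) x) δ} := by
  rintro ⟨x, y⟩ ⟨hx, hy⟩
  simp only [Set.mem_setOf_eq] at hx hy
  -- the defining relation in the presented monoid
  have hrel : PresentedMonoid.of (ybMonRel g f) x * PresentedMonoid.of (ybMonRel g f) y =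
      PresentedMonoid.of (ybMonRel g f) (g x y) * PresentedMonoid.of (ybMonRel g f) (f y x) := by
    exact Quotient.sound (ConGen.Rel.of _ _ ⟨x, y, rfl, rfl⟩)
  -- x, y divide δ, hence lie in M_δ, hence so does the product
  have hmem : PresentedMonoid.of (ybMonRel g f) (g x y) *
      PresentedMonoid.of (ybMonRel g f) (f y x) ∈ Submonoid.closure (LDiv δ) := by
    rw [← hrel]
    exact mul_mem (Submonoid.subset_closure hx) (Submonoid.subset_closure hy)
  obtain ⟨h1, h2⟩ := hclosed _ _ hmem
  -- every generator divides Δ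
  have hgen : ∀ z : X, PresentedMonoid.of (ybMonRel g f) z ∈ LDiv Δ := fun z =>
    hΔr.1 _ ⟨z, rfl⟩
  have key : ∀ z : X, PresentedMonoid.of (ybMonRel g f) z ∈ Submonoid.closure (LDiv δ) →
      LDvd (PresentedMonoid.of (ybMonRel g f) z) δ := by
    intro z hz
    have : PresentedMonoid.of (ybMonRel g f) z ∈
        (Submonoid.closure (LDiv δ) : Set _) ∩ LDiv Δ := ⟨hz, hgen z⟩
    rw [hpar] at this
    exact this
  rw [hS]
  exact ⟨key _ h1, key _ h2⟩
end

section
/- Let (X,S) be a non-degenerate symmetric solution with X finite, and g ∈ G(X,S). Define X' = gXg⁻¹ and S'(gxg⁻¹, gyg⁻¹) = (g·g_x(y)·g⁻¹, g·f_y(x)·g⁻¹). Then (X',S') is a set-theoretical solution isomorphic to (X,S), and for any standard parabolic subgroup G_δ of G(X,S) with Supp(δ) = Y, the set gYg⁻¹ is an invariant subset of (X',S'). -/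
/-- The conjugated generators `x' = c x c⁻¹` of the structure group. -/
def conjGen {X : Type*} (g f : X → X → X) (c : PresentedGroup (structureRels g f)) (x : X) :
    PresentedGroup (structureRels g f) :=
  c * PresentedGroup.of x * c⁻¹

namespace YBEAux

open Multiplicative

variable {X : Type*}

/-- Action of permutations of `X` on `X → Multiplicative ℤ`. -/
def permAct : Equiv.Perm X →* MulAut (X → Multiplicative ℤ) where
  toFun σ :=
    { toFun := fun a => a ∘ σ.symm
      invFun := fun a => a ∘ σ
      left_inv := fun a => by funext t; simp
      right_inv := fun a => by funext t; simp
      map_mul' := fun a b => rfl }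
  map_one' := by apply MulEquiv.ext; intro a; rfl
  map_mul' := fun σ τ => by apply MulEquiv.ext; intro a; rfl

lemma permAct_apply (σ : Equiv.Perm X) (a : X → Multiplicative ℤ) :
    permAct σ a = a ∘ σ.symm := rfl

abbrev NX (X : Type*) := SemidirectProduct (X → Multiplicative ℤ) (Equiv.Perm X) permAct

open Classical in
noncomputable def evec (x : X) : X → Multiplicative ℤ := fun t => if t = x then ofAdd 1 else 1

lemma evec_self (x : X) : evec x x = ofAdd 1 := by simp [evec]

lemma evec_ne {x t : X} (h : t ≠ x) : evec x t = 1 := by simp [evec, h]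

noncomputable def gperm (g : X → X → X) (hg : ∀ x, Function.Bijective (g x)) (x : X) :
    Equiv.Perm X :=
  Equiv.ofBijective (g x) (hg x)

lemma gperm_apply (g : X → X → X) (hg : ∀ x, Function.Bijective (g x)) (x y : X) :
    gperm g hg x y = g x y := rfl

lemma gperm_symm_apply (g : X → X → X) (hg : ∀ x, Function.Bijective (g x)) (x y : X) :
    (gperm g hg x).symm (g x y) = y := by
  rw [← gperm_apply g hg x y, Equiv.symm_apply_apply]

lemma gperm_apply_symm (g : X → X → X) (hg : ∀ x, Function.Bijective (g x)) (x z : X) :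
    g x ((gperm g hg x).symm z) = z := by
  conv_rhs => rw [← Equiv.apply_symm_apply (gperm g hg x) z]
  rfl

noncomputable def Fgen (g : X → X → X) (hg : ∀ x, Function.Bijective (g x)) (x : X) : NX X :=
  ⟨evec x, gperm g hg x⟩

lemma evec_comp (g : X → X → X) (hg : ∀ x, Function.Bijective (g x)) (x y : X) :
    evec y ∘ ⇑(gperm g hg x).symm = evec (g x y) := by
  funext t
  by_cases h : t = g x y
  · subst h
    simp only [Function.comp_apply, gperm_symm_apply, evec_self]
  · have h2 : (gperm g hg x).symm t ≠ y := by
      intro hc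
      apply h
      rw [← gperm_apply g hg x y, ← hc, Equiv.apply_symm_apply]
    simp only [Function.comp_apply, evec_ne h, evec_ne h2]

lemma relN (g f : X → X → X) (hg : ∀ x, Function.Bijective (g x))
    (h1 : ∀ x y, g (g x y) (f y x) = x)
    (hbr : ∀ x y z, g (g x y) (g (f y x) z) = g x (g y z)) (x y : X) :
    Fgen g hg x * Fgen g hg y = Fgen g hg (g x y) * Fgen g hg (f y x) := by
  refine SemidirectProduct.ext ?_ ?_
  · show evec x * permAct (gperm g hg x) (evec y)
      = evec (g x y) * permAct (gperm g hg (g x y)) (evec (f y x))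
    rw [permAct_apply, permAct_apply, evec_comp, evec_comp, h1, mul_comm]
  · show gperm g hg x * gperm g hg y = gperm g hg (g x y) * gperm g hg (f y x)
    ext z
    simp only [Equiv.Perm.mul_apply, gperm_apply]
    exact (hbr x y z).symm

lemma relsN_group (g f : X → X → X) (hg : ∀ x, Function.Bijective (g x))
    (h1 : ∀ x y, g (g x y) (f y x) = x)
    (hbr : ∀ x y z, g (g x y) (g (f y x) z) = g x (g y z)) :
    ∀ r ∈ structureRels g f, FreeGroup.lift (Fgen g hg) r = 1 := by
  rintro r ⟨x, y, rfl⟩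
  simp only [map_mul, map_inv, FreeGroup.lift_apply_of]
  rw [mul_inv_eq_one]
  exact relN g f hg h1 hbr x y

lemma of_injective (g f : X → X → X) (hg : ∀ x, Function.Bijective (g x))
    (h1 : ∀ x y, g (g x y) (f y x) = x)
    (hbr : ∀ x y z, g (g x y) (g (f y x) z) = g x (g y z)) :
    Function.Injective (PresentedGroup.of (rels := structureRels g f) (α := X)) := by
  intro a b hab
  have h := congrArg (PresentedGroup.toGroup (relsN_group g f hg h1 hbr)) hab
  rw [PresentedGroup.toGroup.of, PresentedGroup.toGroup.of] at h
  have h2 := congrFun (congrArg SemidirectProduct.left h) a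
  by_contra hne
  rw [show (Fgen g hg a).left = evec a from rfl,
    show (Fgen g hg b).left = evec b from rfl] at h2
  rw [evec_self, evec_ne hne] at h2
  simpa using h2

lemma relM_lift (g f : X → X → X) (hg : ∀ x, Function.Bijective (g x))
    (h1 : ∀ x y, g (g x y) (f y x) = x)
    (hbr : ∀ x y z, g (g x y) (g (f y x) z) = g x (g y z)) :
    ∀ a b, ybMonRel g f a b →
      FreeMonoid.lift (Fgen g hg) a = FreeMonoid.lift (Fgen g hg) b := by
  rintro a b ⟨x, y, rfl, rfl⟩
  simp only [map_mul, FreeMonoid.lift_eval_of]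
  exact relN g f hg h1 hbr x y

noncomputable def phiM (g f : X → X → X) (hg : ∀ x, Function.Bijective (g x))
    (h1 : ∀ x y, g (g x y) (f y x) = x)
    (hbr : ∀ x y z, g (g x y) (g (f y x) z) = g x (g y z)) :
    PresentedMonoid (ybMonRel g f) →* NX X :=
  PresentedMonoid.lift (Fgen g hg) (relM_lift g f hg h1 hbr)

section Pi

variable (g f : X → X → X) (hg : ∀ x, Function.Bijective (g x))
    (h1 : ∀ x y, g (g x y) (f y x) = x)
    (hbr : ∀ x y z, g (g x y) (g (f y x) z) = g x (g y z))

noncomputable def piM (m : PresentedMonoid (ybMonRel g f)) : X → Multiplicative ℤ :=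
  (phiM g f hg h1 hbr m).left

lemma piM_of_mul (x : X) (m : PresentedMonoid (ybMonRel g f)) :
    piM g f hg h1 hbr (PresentedMonoid.of (ybMonRel g f) x * m)
      = evec x * (piM g f hg h1 hbr m ∘ ⇑(gperm g hg x).symm) := by
  unfold piM
  rw [map_mul]
  rfl

lemma relM (a b : X) :
    PresentedMonoid.of (ybMonRel g f) a * PresentedMonoid.of (ybMonRel g f) b =
      PresentedMonoid.of (ybMonRel g f) (g a b) * PresentedMonoid.of (ybMonRel g f) (f b a) := by
  apply (Con.eq _).mpr
  exact ConGen.Rel.of _ _ ⟨a, b, rfl, rfl⟩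

lemma mk_of_mul (x : X) (w : FreeMonoid X) :
    PresentedMonoid.mk (ybMonRel g f) (FreeMonoid.of x * w)
      = PresentedMonoid.of (ybMonRel g f) x * PresentedMonoid.mk (ybMonRel g f) w :=
  map_mul _ _ _

lemma piM_nonneg : ∀ (m : PresentedMonoid (ybMonRel g f)) (t : X),
    (0 : ℤ) ≤ toAdd (piM g f hg h1 hbr m t) := by
  intro m
  induction m using PresentedMonoid.inductionOn with
  | _ w =>
    induction w using FreeMonoid.inductionOn' with
    | one =>
      intro t
      have : piM g f hg h1 hbr (PresentedMonoid.mk (ybMonRel g f) 1) t = 1 := by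
        rw [map_one]
        show (1 : NX X).left t = 1
        rfl
      rw [this]
      simp
    | of_mul x w ih =>
      intro t
      rw [mk_of_mul, piM_of_mul]
      simp only [Pi.mul_apply, Function.comp_apply, toAdd_mul]
      have h2 : (0:ℤ) ≤ toAdd (evec x t) := by
        by_cases h : t = x
        · subst h; rw [evec_self]; simp
        · rw [evec_ne h]; simp
      have h3 := ih ((gperm g hg x).symm t)
      omega

lemma piM_pos_of_ldvd {z : X} {m : PresentedMonoid (ybMonRel g f)}
    (hdvd : LDvd (PresentedMonoid.of (ybMonRel g f) z) m) :
    0 < toAdd (piM g f hg h1 hbr m z) := by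
  obtain ⟨u, rfl⟩ := hdvd
  rw [piM_of_mul]
  simp only [Pi.mul_apply, Function.comp_apply, toAdd_mul, evec_self, toAdd_ofAdd]
  have := piM_nonneg g f hg h1 hbr u ((gperm g hg z).symm z)
  omega

lemma ldvd_of_piM_ne : ∀ (m : PresentedMonoid (ybMonRel g f)) (z : X),
    toAdd (piM g f hg h1 hbr m z) ≠ 0 →
    LDvd (PresentedMonoid.of (ybMonRel g f) z) m := by
  intro m
  induction m using PresentedMonoid.inductionOn with
  | _ w =>
    induction w using FreeMonoid.inductionOn' with
    | one =>
      intro z hz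
      exfalso
      apply hz
      have : piM g f hg h1 hbr (PresentedMonoid.mk (ybMonRel g f) 1) z = 1 := by
        rw [map_one]; rfl
      rw [this]
      simp
    | of_mul x w ih =>
      intro z hz
      rw [mk_of_mul] at hz ⊢
      by_cases hzx : z = x
      · subst hzx
        exact ⟨PresentedMonoid.mk (ybMonRel g f) w, rfl⟩
      · rw [piM_of_mul] at hz
        simp only [Pi.mul_apply, Function.comp_apply, toAdd_mul, evec_ne hzx, toAdd_one,
          zero_add] at hz
        obtain ⟨v, hv⟩ := ih ((gperm g hg x).symm z) hz
        rw [hv, ← mul_assoc, relM g f, gperm_apply_symm g hg x z]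
        exact ⟨PresentedMonoid.of (ybMonRel g f) (f ((gperm g hg x).symm z) x) * v,
          by rw [mul_assoc]⟩

include hg h1 hbr in
lemma lemL {Δm : PresentedMonoid (ybMonRel g f)} {x z : X}
    (hx : LDvd (PresentedMonoid.of (ybMonRel g f) x) Δm)
    (hz : LDvd (PresentedMonoid.of (ybMonRel g f) z) Δm) (hne : z ≠ x) :
    LDvd (PresentedMonoid.of (ybMonRel g f) x *
      PresentedMonoid.of (ybMonRel g f) ((gperm g hg x).symm z)) Δm := by
  obtain ⟨u, rfl⟩ := hx
  have hpos := piM_pos_of_ldvd g f hg h1 hbr hz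
  rw [piM_of_mul] at hpos
  simp only [Pi.mul_apply, Function.comp_apply, toAdd_mul, evec_ne hne, toAdd_one,
    zero_add] at hpos
  obtain ⟨v, hv⟩ := ldvd_of_piM_ne g f hg h1 hbr u ((gperm g hg x).symm z) (by omega)
  exact ⟨v, by rw [hv, mul_assoc]⟩

include hg h1 hbr in
lemma mainD {Δm δm : PresentedMonoid (ybMonRel g f)}
    (hΔr1 : ∀ t : X, LDvd (PresentedMonoid.of (ybMonRel g f) t) Δm)
    (hδbal : BalancedElem δm)
    (hpar : (Submonoid.closure (LDiv δm) : Set (PresentedMonoid (ybMonRel g f))) ∩ LDiv Δm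
      = LDiv δm)
    {x y : X} (hx : LDvd (PresentedMonoid.of (ybMonRel g f) x) δm)
    (hy : LDvd (PresentedMonoid.of (ybMonRel g f) y) δm) :
    LDvd (PresentedMonoid.of (ybMonRel g f) (g x y)) δm ∧
      LDvd (PresentedMonoid.of (ybMonRel g f) (f y x)) δm := by
  by_cases hzx : g x y = x
  · constructor
    · rw [hzx]; exact hx
    · have e1 := h1 x y
      rw [hzx] at e1
      have hfy : f y x = y := (hg x).1 (e1.trans hzx.symm)
      rw [hfy]; exact hy
  · have hstep : LDvd (PresentedMonoid.of (ybMonRel g f) x *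
        PresentedMonoid.of (ybMonRel g f) y) Δm := by
      have hL := lemL g f hg h1 hbr (hΔr1 x) (hΔr1 (g x y)) hzx
      rwa [gperm_symm_apply] at hL
    have hmem : (PresentedMonoid.of (ybMonRel g f) x * PresentedMonoid.of (ybMonRel g f) y)
        ∈ LDiv δm := by
      rw [← hpar]
      exact ⟨Submonoid.mul_mem _ (Submonoid.subset_closure hx) (Submonoid.subset_closure hy),
        hstep⟩
    obtain ⟨w, hw⟩ := hmem
    rw [relM g f x y] at hw
    constructor
    · exact ⟨PresentedMonoid.of (ybMonRel g f) (f y x) * w, by rw [hw, mul_assoc]⟩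
    · have hr : (PresentedMonoid.of (ybMonRel g f) (f y x) * w) ∈ RDiv δm :=
        ⟨PresentedMonoid.of (ybMonRel g f) (g x y), by rw [hw, ← mul_assoc]⟩
      rw [← hδbal] at hr
      obtain ⟨w', hw'⟩ := hr
      exact ⟨w * w', by rw [hw', mul_assoc]⟩

end Pi

end YBEAux


/-- for a finite non-degenerate symmetric solution `(X,S)` and
`c ∈ G(X,S)`, the set `X' = cXc⁻¹` with `S'(cxc⁻¹, cyc⁻¹) = (c g_x(y) c⁻¹, c f_y(x) c⁻¹)`
is a set-theoretical solution isomorphic to `(X,S)` (via the bijection `x ↦ cxc⁻¹`), and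
for any standard parabolic subgroup with balanced element `δ` and support `Y`, the set
`cYc⁻¹` is an invariant subset of `(X',S')`. -/
theorem conjugate_parabolic_invariant {X : Type*} [Fintype X]
    (S : X × X → X × X) (g f : X → X → X)
    (hS : ∀ x y, S (x, y) = (g x y, f y x))
    (hbij : Function.Bijective S)
    (hinv : S ∘ S = id)
    (hbraid : map12 S ∘ map23 S ∘ map12 S = map23 S ∘ map12 S ∘ map23 S)
    (hg : ∀ x, Function.Bijective (g x)) (hf : ∀ x, Function.Bijective (f x))
    (Δ : PresentedMonoid (ybMonRel g f))
    (hΔbal : BalancedElem Δ)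
    (hΔr : IsRightLcmOfSet (Set.range (PresentedMonoid.of (ybMonRel g f))) Δ)
    (hΔl : IsLeftLcmOfSet (Set.range (PresentedMonoid.of (ybMonRel g f))) Δ)
    (ι : PresentedMonoid (ybMonRel g f) →* PresentedGroup (structureRels g f))
    (hι : ∀ x : X, ι (PresentedMonoid.of (ybMonRel g f) x) = PresentedGroup.of x)
    (δ : PresentedMonoid (ybMonRel g f))
    (hδΔ : δ ∈ LDiv Δ) (hδbal : BalancedElem δ)
    (hpar : (Submonoid.closure (LDiv δ) : Set _) ∩ LDiv Δ = LDiv δ)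
    (c : PresentedGroup (structureRels g f)) :
    Function.Injective (conjGen g f c) ∧
    ∃ S' : ↥(Set.range (conjGen g f c)) × ↥(Set.range (conjGen g f c)) →
        ↥(Set.range (conjGen g f c)) × ↥(Set.range (conjGen g f c)),
      Function.Bijective S' ∧
      (∀ x y : X,
        S' (⟨conjGen g f c x, Set.mem_range_self x⟩, ⟨conjGen g f c y, Set.mem_range_self y⟩) =
          (⟨conjGen g f c (g x y), Set.mem_range_self _⟩,
           ⟨conjGen g f c (f y x), Set.mem_range_self _⟩)) ∧
      (∀ a b : ↥(Set.range (conjGen g f c)),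
        (a : PresentedGroup (structureRels g f)) ∈
            conjGen g f c '' {x : X | LDvd (PresentedMonoid.of (ybMonRel g f) x) δ} →
        (b : PresentedGroup (structureRels g f)) ∈
            conjGen g f c '' {x : X | LDvd (PresentedMonoid.of (ybMonRel g f) x) δ} →
        ((S' (a, b)).1 : PresentedGroup (structureRels g f)) ∈
            conjGen g f c '' {x : X | LDvd (PresentedMonoid.of (ybMonRel g f) x) δ} ∧
        ((S' (a, b)).2 : PresentedGroup (structureRels g f)) ∈
            conjGen g f c '' {x : X | LDvd (PresentedMonoid.of (ybMonRel g f) x) δ}) := by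
  classical
  have h1 : ∀ x y, g (g x y) (f y x) = x := by
    intro x y
    have h := congrFun hinv (x, y)
    simp only [Function.comp_apply, id_eq, hS, Prod.mk.injEq] at h
    exact h.1
  have h2 : ∀ x y, f (f y x) (g x y) = y := by
    intro x y
    have h := congrFun hinv (x, y)
    simp only [Function.comp_apply, id_eq, hS, Prod.mk.injEq] at h
    exact h.2
  have hbr : ∀ x y z, g (g x y) (g (f y x) z) = g x (g y z) := by
    intro x y z
    have h := congrFun hbraid (x, (y, z))
    simp only [Function.comp_apply, map12, map23, hS, Prod.mk.injEq] at h
    exact h.1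
  have hinj : Function.Injective (conjGen g f c) := by
    intro a b hab
    apply YBEAux.of_injective g f hg h1 hbr
    have hab' : c * PresentedGroup.of a * c⁻¹ = c * PresentedGroup.of b * c⁻¹ := hab
    have := mul_right_cancel hab'
    exact mul_left_cancel this
  let e : X ≃ ↥(Set.range (conjGen g f c)) :=
    Equiv.ofBijective (fun x => ⟨conjGen g f c x, Set.mem_range_self x⟩)
      ⟨fun a b hab => hinj (congrArg Subtype.val hab),
       fun t => by obtain ⟨x, hx⟩ := t.2; exact ⟨x, Subtype.ext hx⟩⟩
  have hkey : ∀ {x y : X}, LDvd (PresentedMonoid.of (ybMonRel g f) x) δ →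
      LDvd (PresentedMonoid.of (ybMonRel g f) y) δ →
      LDvd (PresentedMonoid.of (ybMonRel g f) (g x y)) δ ∧
        LDvd (PresentedMonoid.of (ybMonRel g f) (f y x)) δ :=
    fun hx hy => YBEAux.mainD g f hg h1 hbr (fun t => hΔr.1 _ ⟨t, rfl⟩) hδbal hpar hx hy
  refine ⟨hinj,
    fun p => (e (g (e.symm p.1) (e.symm p.2)), e (f (e.symm p.2) (e.symm p.1))), ?_, ?_, ?_⟩
  · apply Function.Involutive.bijective
    intro p
    simp only [Equiv.symm_apply_apply]
    rw [h1, h2]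
    exact Prod.ext (Equiv.apply_symm_apply e p.1) (Equiv.apply_symm_apply e p.2)
  · intro x y
    show (e (g (e.symm (e x)) (e.symm (e y))), e (f (e.symm (e y)) (e.symm (e x)))) = _
    rw [Equiv.symm_apply_apply, Equiv.symm_apply_apply]
    rfl
  · rintro a b ⟨x, hxD, hxa⟩ ⟨y, hyD, hyb⟩
    have hD := hkey hxD hyD
    have ha : a = e x := Subtype.ext hxa.symm
    have hb : b = e y := Subtype.ext hyb.symm
    subst ha
    subst hb
    constructor
    · show ((e (g (e.symm (e x)) (e.symm (e y)))) : PresentedGroup (structureRels g f)) ∈ _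
      rw [Equiv.symm_apply_apply, Equiv.symm_apply_apply]
      exact ⟨g x y, hD.1, rfl⟩
    · show ((e (f (e.symm (e y)) (e.symm (e x)))) : PresentedGroup (structureRels g f)) ∈ _
      rw [Equiv.symm_apply_apply, Equiv.symm_apply_apply]
      exact ⟨f y x, hD.2, rfl⟩
end

section
/- The group G presented by generators x₁, x₂, x₃, x₄ and relations x₁² = x₂², x₁x₂ = x₃x₄, x₁x₃ = x₄x₂, x₃² = x₄², x₂x₄ = x₃x₁, x₂x₁ = x₄x₃ is the structure group of an indecomposable non-degenerate symmetric solution; in particular the subgroup of G generated by {x₁, x₂} is isomorphic to the group ⟨x, y | x² = y²⟩. -/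
/-- The relators of the group `G = ⟨x₁,x₂,x₃,x₄ ∣ x₁² = x₂², x₁x₂ = x₃x₄, x₁x₃ = x₄x₂,
x₃² = x₄², x₂x₄ = x₃x₁, x₂x₁ = x₄x₃⟩` (generators indexed by `Fin 4`, `i ↦ x_{i+1}`). -/
def exRels : Set (FreeGroup (Fin 4)) :=
  { FreeGroup.of 0 * FreeGroup.of 0 * (FreeGroup.of 1 * FreeGroup.of 1)⁻¹,
    FreeGroup.of 0 * FreeGroup.of 1 * (FreeGroup.of 2 * FreeGroup.of 3)⁻¹,
    FreeGroup.of 0 * FreeGroup.of 2 * (FreeGroup.of 3 * FreeGroup.of 1)⁻¹,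
    FreeGroup.of 2 * FreeGroup.of 2 * (FreeGroup.of 3 * FreeGroup.of 3)⁻¹,
    FreeGroup.of 1 * FreeGroup.of 3 * (FreeGroup.of 2 * FreeGroup.of 0)⁻¹,
    FreeGroup.of 1 * FreeGroup.of 0 * (FreeGroup.of 3 * FreeGroup.of 2)⁻¹ }

/-- The relator of `⟨x, y ∣ x² = y²⟩` (generators indexed by `Bool`). -/
def sqRels : Set (FreeGroup Bool) :=
  { FreeGroup.of true * FreeGroup.of true * (FreeGroup.of false * FreeGroup.of false)⁻¹ }

lemma rel_eq_one {α : Type*} {rels : Set (FreeGroup α)} {r : FreeGroup α} (hr : r ∈ rels) :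
    PresentedGroup.mk rels r = 1 :=
  (QuotientGroup.eq_one_iff _).mpr (Subgroup.subset_normalClosure hr)

/-- x₁² = x₂² in the big group. -/
lemma ex_sq : (PresentedGroup.of 0 : PresentedGroup exRels) * PresentedGroup.of 0 =
    PresentedGroup.of 1 * PresentedGroup.of 1 := by
  have := rel_eq_one (rels := exRels)
    (r := FreeGroup.of 0 * FreeGroup.of 0 * (FreeGroup.of 1 * FreeGroup.of 1)⁻¹)
    (by simp [exRels])
  have h : (PresentedGroup.of 0 : PresentedGroup exRels) * PresentedGroup.of 0 *
      (PresentedGroup.of 1 * PresentedGroup.of 1)⁻¹ = 1 := by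
    simpa [PresentedGroup.of] using this
  group at h ⊢
  exact mul_inv_eq_one.mp h

/-- a² = b² in the small group. -/
lemma sq_sq : (PresentedGroup.of true : PresentedGroup sqRels) * PresentedGroup.of true =
    PresentedGroup.of false * PresentedGroup.of false := by
  have := rel_eq_one (rels := sqRels)
    (r := FreeGroup.of true * FreeGroup.of true * (FreeGroup.of false * FreeGroup.of false)⁻¹)
    (by simp [sqRels])
  have h : (PresentedGroup.of true : PresentedGroup sqRels) * PresentedGroup.of true *
      (PresentedGroup.of false * PresentedGroup.of false)⁻¹ = 1 := by
    simpa [PresentedGroup.of] using this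
  exact mul_inv_eq_one.mp h

noncomputable def phiFun : Bool → PresentedGroup exRels :=
  fun b => if b then PresentedGroup.of 0 else PresentedGroup.of 1

lemma phi_rels : ∀ r ∈ sqRels, FreeGroup.lift phiFun r = 1 := by
  intro r hr
  simp only [sqRels, Set.mem_singleton_iff] at hr
  subst hr
  simp only [map_mul, map_inv, FreeGroup.lift_apply_of, phiFun, if_true, if_false]
  rw [mul_inv_eq_one]
  exact_mod_cast ex_sq

noncomputable def phi : PresentedGroup sqRels →* PresentedGroup exRels :=
  PresentedGroup.toGroup phi_rels

noncomputable def psiFun : Fin 4 → PresentedGroup sqRels :=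
  ![PresentedGroup.of true, PresentedGroup.of false, PresentedGroup.of true,
    PresentedGroup.of false]

lemma psi_rels : ∀ r ∈ exRels, FreeGroup.lift psiFun r = 1 := by
  intro r hr
  have key : (PresentedGroup.of true : PresentedGroup sqRels) * PresentedGroup.of true *
      (PresentedGroup.of false * PresentedGroup.of false)⁻¹ = 1 := by
    rw [mul_inv_eq_one]; exact sq_sq
  have key' : (PresentedGroup.of false : PresentedGroup sqRels) * PresentedGroup.of false *
      (PresentedGroup.of true * PresentedGroup.of true)⁻¹ = 1 := by
    rw [mul_inv_eq_one]; exact sq_sq.symm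
  simp only [exRels, Set.mem_insert_iff, Set.mem_singleton_iff] at hr
  rcases hr with h | h | h | h | h | h <;> subst h <;>
    simp only [map_mul, map_inv, FreeGroup.lift_apply_of, psiFun, Matrix.cons_val_zero,
      Matrix.cons_val_one, Matrix.head_cons, Matrix.cons_val_two, Matrix.tail_cons,
      Matrix.cons_val_three, Matrix.head_fin_const] <;>
    first
      | exact key
      | exact key'
      | (rw [mul_inv_eq_one])

noncomputable def psi : PresentedGroup exRels →* PresentedGroup sqRels :=
  PresentedGroup.toGroup psi_rels

lemma psi_phi : psi.comp phi = MonoidHom.id _ := by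
  ext b
  cases b <;> simp [phi, psi, phiFun, psiFun, PresentedGroup.toGroup.of]

lemma phi_inj : Function.Injective phi := by
  have : Function.LeftInverse psi phi := fun x => by
    have := congrArg (fun f => f x) psi_phi
    simpa using this
  exact this.injective

lemma phi_range : phi.range = Subgroup.closure
    {(PresentedGroup.of 0 : PresentedGroup exRels), PresentedGroup.of 1} := by
  have htop : (⊤ : Subgroup (PresentedGroup sqRels)) =
      Subgroup.closure (Set.range (PresentedGroup.of : Bool → PresentedGroup sqRels)) :=
    (PresentedGroup.closure_range_of sqRels).symm
  rw [MonoidHom.range_eq_map, htop, MonoidHom.map_closure]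
  congr 1
  ext g
  constructor
  · rintro ⟨_, ⟨b, rfl⟩, rfl⟩
    cases b
    · right; simp [phi, phiFun, PresentedGroup.toGroup.of]
    · left; simp [phi, phiFun, PresentedGroup.toGroup.of]
  · rintro (rfl | rfl)
    · exact ⟨PresentedGroup.of true, ⟨true, rfl⟩, by simp [phi, phiFun]⟩
    · exact ⟨PresentedGroup.of false, ⟨false, rfl⟩, by simp [phi, phiFun]⟩

/-- in the structure group `G` of the indecomposable solution of
Example 5.3, the subgroup generated by `x₁` and `x₂` is isomorphic to the group
`⟨x, y ∣ x² = y²⟩`. -/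
theorem subgroup_isomorphic_to_sq :
    Nonempty
      ((Subgroup.closure {(PresentedGroup.of 0 : PresentedGroup exRels),
          PresentedGroup.of 1} : Subgroup (PresentedGroup exRels)) ≃*
        PresentedGroup sqRels) := by
  exact ⟨((MonoidHom.ofInjective phi_inj).trans (MulEquiv.subgroupCongr phi_range)).symm⟩
end
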